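/- arXiv:2108.09428 — 9 statements merged into one kernel-verified Lean document; each statement's English description precedes it below -/
import Mathlib

section
/- Let C be an [n,k,d] linear code over F_q with k > 1 meeting n = 1 + ∑_{i=0}^{k-1} ⌈d/q^i⌉ (a near Griesmer code). If q divides d, then there is no [n,k,d+1] linear code over F_q, i.e., C is distance-optimal. -/
/-!
Griesmer bound by residual codes: restrict `C` to the zeros of a codeword `c` of minimal weight
`w`. Only the multiples of `c` vanish there, so the dimension drops by exactly one, and every
nonzero residual word has weight at least `⌈w / q⌉`. Induction gives
`n ≥ ∑_{i<k} ⌈d / q^i⌉`.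

If `q ∣ d`, then `⌈(d + 1) / q⌉ = d / q + 1`, so for `k ≥ 2` the first two terms of the Griesmer
sum each grow by one when `d` is replaced by `d + 1`; hence an `[n, k, d + 1]` code would need
`n ≥ 2 + ∑_{i<k} ⌈d / q^i⌉`.
-/

open Finset Module

lemma Nat.ceilDiv_mono_left {b : ℕ} (hb : 0 < b) : Monotone (· ⌈/⌉ b : ℕ → ℕ) :=
  (gc_mul_ceilDiv hb).monotone_l

lemma Nat.ceilDiv_ceilDiv {b c : ℕ} (hb : 0 < b) (hc : 0 < c) (a : ℕ) :
    a ⌈/⌉ b ⌈/⌉ c = a ⌈/⌉ (b * c) :=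
  eq_of_forall_ge_iff fun m => by
    rw [ceilDiv_le_iff_le_mul hc, ceilDiv_le_iff_le_mul hb,
      ceilDiv_le_iff_le_mul (Nat.mul_pos hb hc), mul_assoc]

lemma Nat.ceilDiv_lt_ceilDiv_succ_of_dvd {q d : ℕ} (hq : 0 < q) (hd : q ∣ d) :
    d ⌈/⌉ q < (d + 1) ⌈/⌉ q := by
  obtain ⟨m, rfl⟩ := hd
  rw [show q * m ⌈/⌉ q = m from smul_ceilDiv hq m, lt_iff_not_ge, ceilDiv_le_iff_le_mul hq]
  omega

def griesmerBound (q k d : ℕ) : ℕ := ∑ i ∈ range k, d ⌈/⌉ q ^ i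

lemma griesmerBound_mono {q : ℕ} (hq : 0 < q) (k : ℕ) : Monotone (griesmerBound q k) :=
  fun _ _ h => sum_le_sum fun _ _ => Nat.ceilDiv_mono_left (Nat.pow_pos hq) h

lemma griesmerBound_succ {q : ℕ} (hq : 0 < q) (k d : ℕ) :
    griesmerBound q (k + 1) d = d + griesmerBound q k (d ⌈/⌉ q) := by
  simp only [griesmerBound, sum_range_succ', pow_zero, ceilDiv_one, pow_succ',
    Nat.ceilDiv_ceilDiv hq (Nat.pow_pos hq)]
  ring

lemma griesmerBound_add_two_le_succ {q k d : ℕ} (hq : 0 < q) (hk : 1 < k) (hd : q ∣ d) :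
    griesmerBound q k d + 2 ≤ griesmerBound q k (d + 1) := by
  obtain ⟨k, rfl⟩ : ∃ k', k = k' + 2 := ⟨k - 2, by omega⟩
  have hlt := Nat.ceilDiv_lt_ceilDiv_succ_of_dvd hq hd
  have htail : griesmerBound q k (d ⌈/⌉ q ⌈/⌉ q) ≤ griesmerBound q k ((d + 1) ⌈/⌉ q ⌈/⌉ q) :=
    griesmerBound_mono hq k (Nat.ceilDiv_mono_left hq hlt.le)
  rw [griesmerBound_succ hq (k + 1), griesmerBound_succ hq k, griesmerBound_succ hq (k + 1),
    griesmerBound_succ hq k]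
  omega

section ResidualCode

variable {F : Type*} [Field F] [DecidableEq F] {ι : Type*} [Fintype ι]

lemma hammingNorm_restrict_zeros (c x : ι → F) :
    hammingNorm (fun j : {i // c i = 0} => x j) = #{i | c i = 0 ∧ x i ≠ 0} := by
  rw [hammingNorm, ← Fintype.card_subtype, ← Fintype.card_subtype]
  exact Fintype.card_congr (Equiv.subtypeSubtypeEquivSubtypeInter _ fun i => x i ≠ 0)

lemma hammingNorm_sub_smul (c x : ι → F) (a : F) :
    hammingNorm (x - a • c) = #{i | c i = 0 ∧ x i ≠ 0} + #{i | c i ≠ 0 ∧ x i ≠ a * c i} := by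
  simp only [hammingNorm, card_filter, ← sum_add_distrib]
  refine sum_congr rfl fun i _ => ?_
  by_cases hci : c i = 0 <;> simp [hci, sub_eq_zero]

lemma hammingNorm_eq_card_add_card (c x : ι → F) (a : F) :
    hammingNorm c = #{i | c i ≠ 0 ∧ x i = a * c i} + #{i | c i ≠ 0 ∧ x i ≠ a * c i} := by
  simp only [hammingNorm, card_filter, ← sum_add_distrib]
  refine sum_congr rfl fun i _ => ?_
  by_cases hci : c i = 0 <;> by_cases hxi : x i = a * c i <;> simp [hci, hxi]

lemma hammingNorm_eq_sum_card_ratio [Fintype F] (c x : ι → F) :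
    hammingNorm c = ∑ a : F, #{i | c i ≠ 0 ∧ x i = a * c i} := by
  rw [hammingNorm, card_eq_sum_card_fiberwise (f := fun i => x i / c i) (t := univ)
    fun _ _ => mem_univ _]
  refine sum_congr rfl fun a _ => congrArg card ?_
  ext i
  by_cases hci : c i = 0
  · simp [hci]
  · simp [hci, div_eq_iff hci]

lemma Submodule.exists_min_hammingNorm [Finite F] (C : Submodule F (ι → F)) (hC : C ≠ ⊥) :
    ∃ c ∈ C, c ≠ 0 ∧ ∀ v ∈ C, v ≠ 0 → hammingNorm c ≤ hammingNorm v := by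
  obtain ⟨c, hc, hc0⟩ := Submodule.exists_mem_ne_zero_of_ne_bot hC
  obtain ⟨c, ⟨hc, hc0⟩, hmin⟩ :=
    Set.exists_min_image {v | v ∈ C ∧ v ≠ 0} hammingNorm (Set.toFinite _) ⟨c, hc, hc0⟩
  exact ⟨c, hc, hc0, fun v hv hv0 => hmin v ⟨hv, hv0⟩⟩

variable {C : Submodule F (ι → F)} {c : ι → F}

lemma eq_smul_of_support_subset (hc : c ∈ C) (hc0 : c ≠ 0)
    (hmin : ∀ v ∈ C, v ≠ 0 → hammingNorm c ≤ hammingNorm v)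
    {x : ι → F} (hx : x ∈ C) (hsupp : ∀ i, c i = 0 → x i = 0) : ∃ a : F, a • c = x := by
  obtain ⟨i₀, hi₀⟩ := Function.ne_iff.1 hc0
  refine ⟨x i₀ / c i₀, (sub_eq_zero.1 ?_).symm⟩
  by_contra hne
  have hlt : hammingNorm (x - (x i₀ / c i₀) • c) < hammingNorm c := by
    rw [hammingNorm_sub_smul, filter_false_of_mem fun i _ ⟨hci, hxi⟩ => hxi (hsupp i hci),
      card_empty, zero_add, hammingNorm]
    refine card_lt_card ((ssubset_iff_of_subset fun i => ?_).2 ⟨i₀, ?_, ?_⟩)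
    · simp only [mem_filter, mem_univ, true_and]; exact And.left
    · simpa using hi₀
    · simp [div_mul_cancel₀ _ hi₀]
  exact hlt.not_ge (hmin _ (C.sub_mem hx (C.smul_mem _ hc)) hne)

/-- Pigeonhole on the ratio `x i / c i` over the support of `c`: as `x - a • c` is a nonzero
codeword, minimality of `c` allows at most as many support positions with ratio `a` as there are
zeros of `c` where `x ≠ 0`. -/
lemma hammingNorm_le_card_mul_hammingNorm_restrict [Fintype F] (hc : c ∈ C)
    (hmin : ∀ v ∈ C, v ≠ 0 → hammingNorm c ≤ hammingNorm v)
    {x : ι → F} (hx : x ∈ C) (hx0 : (fun j : {i // c i = 0} => x j) ≠ 0) :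
    hammingNorm c ≤ Fintype.card F * hammingNorm (fun j : {i // c i = 0} => x j) := by
  obtain ⟨⟨i₀, hci₀⟩, hxi₀⟩ := Function.ne_iff.1 hx0
  rw [hammingNorm_restrict_zeros]
  have hfiber (a : F) : #{i | c i ≠ 0 ∧ x i = a * c i} ≤ #{i | c i = 0 ∧ x i ≠ 0} := by
    have hne : x - a • c ≠ 0 := Function.ne_iff.2 ⟨i₀, by simpa [hci₀] using hxi₀⟩
    have := hmin _ (C.sub_mem hx (C.smul_mem a hc)) hne
    rw [hammingNorm_sub_smul, hammingNorm_eq_card_add_card c x a] at this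
    omega
  calc hammingNorm c = ∑ a : F, #{i | c i ≠ 0 ∧ x i = a * c i} :=
        hammingNorm_eq_sum_card_ratio c x
    _ ≤ ∑ _a : F, #{i | c i = 0 ∧ x i ≠ 0} := sum_le_sum fun a _ => hfiber a
    _ = Fintype.card F * #{i | c i = 0 ∧ x i ≠ 0} := by rw [sum_const, card_univ, smul_eq_mul]

variable (C c) in
def residualCode : Submodule F ({i // c i = 0} → F) :=
  C.map (LinearMap.funLeft F F Subtype.val)

lemma finrank_residualCode_add_one (hc : c ∈ C) (hc0 : c ≠ 0)
    (hmin : ∀ v ∈ C, v ≠ 0 → hammingNorm c ≤ hammingNorm v) :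
    finrank F (residualCode C c) + 1 = finrank F C := by
  set π := (LinearMap.funLeft F F (Subtype.val : {i // c i = 0} → ι)).comp C.subtype
  have hrange : LinearMap.range π = residualCode C c := by
    rw [LinearMap.range_comp, Submodule.range_subtype, residualCode]
  have hker : LinearMap.ker π = F ∙ (⟨c, hc⟩ : C) := by
    refine le_antisymm (fun x hx => ?_) ((Submodule.span_singleton_le_iff_mem _ _).2 ?_)
    · have hsupp (i : ι) (hci : c i = 0) : x.1 i = 0 := congrFun hx ⟨i, hci⟩
      obtain ⟨a, ha⟩ := eq_smul_of_support_subset hc hc0 hmin x.2 hsupp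
      exact Submodule.mem_span_singleton.2 ⟨a, Subtype.ext ha⟩
    · exact funext fun j => j.2
  have hc0' : (⟨c, hc⟩ : C) ≠ 0 := fun h => hc0 (congrArg Subtype.val h)
  rw [← hrange, ← LinearMap.finrank_range_add_finrank_ker π, hker, finrank_span_singleton hc0']

lemma ceilDiv_card_le_hammingNorm_of_mem_residualCode [Fintype F] (hc : c ∈ C)
    (hmin : ∀ v ∈ C, v ≠ 0 → hammingNorm c ≤ hammingNorm v)
    {y : {i // c i = 0} → F} (hy : y ∈ residualCode C c) (hy0 : y ≠ 0) :
    hammingNorm c ⌈/⌉ Fintype.card F ≤ hammingNorm y := by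
  obtain ⟨x, hx, rfl⟩ := Submodule.mem_map.1 hy
  exact (ceilDiv_le_iff_le_mul Fintype.card_pos).2
    (hammingNorm_le_card_mul_hammingNorm_restrict hc hmin hx hy0)

lemma card_zeros_add_hammingNorm (c : ι → F) :
    Fintype.card {i // c i = 0} + hammingNorm c = Fintype.card ι := by
  rw [Fintype.card_subtype, hammingNorm, card_filter_add_card_filter_not, card_univ]

end ResidualCode

theorem griesmerBound_le_card {F : Type*} [Field F] [Fintype F] [DecidableEq F]
    {ι : Type*} [Fintype ι] (C : Submodule F (ι → F)) {d : ℕ}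
    (hmin : ∀ v ∈ C, v ≠ 0 → d ≤ hammingNorm v) :
    griesmerBound (Fintype.card F) (finrank F C) d ≤ Fintype.card ι := by
  generalize hk : finrank F C = k
  induction k generalizing ι d with
  | zero => simp [griesmerBound]
  | succ k ih =>
    have hC : C ≠ ⊥ := by rintro rfl; simp at hk
    obtain ⟨c, hc, hc0, hcmin⟩ := C.exists_min_hammingNorm hC
    have hres := ih (residualCode C c)
      (fun y hy hy0 => ceilDiv_card_le_hammingNorm_of_mem_residualCode hc hcmin hy hy0)
      (by have := finrank_residualCode_add_one hc hc0 hcmin; omega)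
    calc griesmerBound (Fintype.card F) (k + 1) d
        ≤ griesmerBound (Fintype.card F) (k + 1) (hammingNorm c) :=
          griesmerBound_mono Fintype.card_pos _ (hmin c hc hc0)
      _ = hammingNorm c + griesmerBound (Fintype.card F) k (hammingNorm c ⌈/⌉ Fintype.card F) :=
          griesmerBound_succ Fintype.card_pos _ _
      _ ≤ Fintype.card ι := by have := card_zeros_add_hammingNorm c; omega

theorem stmt_2_general (q n k d : ℕ) (F : Type*) [Field F] [Fintype F] [DecidableEq F]
    (hq : Fintype.card F = q)
    (hk1 : 1 < k)
    (hn : n = 1 + ∑ i ∈ Finset.range k, (d + q ^ i - 1) / q ^ i)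
    (hd : q ∣ d) :
    ¬ ∃ (C' : Submodule F (Fin n → F)) (d' : ℕ), d < d' ∧
      Module.finrank F C' = k ∧
      (∀ c ∈ C', c ≠ 0 → d' ≤ hammingNorm c) ∧
      (∃ c ∈ C', c ≠ 0 ∧ hammingNorm c = d') := by
  rintro ⟨C', d', hdd', hk', hmin', -⟩
  subst hq
  have hgriesmer := griesmerBound_le_card C' (d := d + 1) fun v hv hv0 =>
    hdd'.trans_le (hmin' v hv hv0)
  rw [hk', Fintype.card_fin] at hgriesmer
  have hgap := griesmerBound_add_two_le_succ Fintype.card_pos hk1 hd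
  change n = 1 + griesmerBound _ k d at hn
  omega

/-- A near Griesmer code with `q ∣ d` is distance-optimal: no code of the same
length and dimension has a larger minimum distance. -/
theorem stmt_2 (q n k d : ℕ) (F : Type*) [Field F] [Fintype F] [DecidableEq F]
    (hq : Fintype.card F = q)
    (C : Submodule F (Fin n → F))
    (hk : Module.finrank F C = k) (hk1 : 1 < k)
    (hmin : ∀ c ∈ C, c ≠ 0 → d ≤ hammingNorm c)
    (hex : ∃ c ∈ C, c ≠ 0 ∧ hammingNorm c = d)
    (hn : n = 1 + ∑ i ∈ Finset.range k, (d + q ^ i - 1) / q ^ i)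
    (hd : q ∣ d) :
    ¬ ∃ (C' : Submodule F (Fin n → F)) (d' : ℕ), d < d' ∧
      Module.finrank F C' = k ∧
      (∀ c ∈ C', c ≠ 0 → d' ≤ hammingNorm c) ∧
      (∃ c ∈ C', c ≠ 0 ∧ hammingNorm c = d') :=
  stmt_2_general q n k d F hq hk1 hn hd
end

section
/- Let q ≥ 2 be a prime power and m > r ≥ 1 with r | m. Then ∑_{i=0}^{m-1} ⌈(q−1)(q^{m−1} − q^{r−1})/q^i⌉ = q^m − q^r. -/
/-! The `i`-th summand is `⌈d / q^i⌉` with `d = (q-1)(q^(m-1) - q^(r-1))`. For `i < r` the power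
`q^i` divides `d` exactly, giving `(q-1)q^(m-1-i) - (q-1)q^(r-1-i)`. For `r ≤ i` we have
`d = q^i (q-1)q^(m-1-i) - (q-1)q^(r-1)` with `(q-1)q^(r-1) < q^r ≤ q^i`, so the ceiling rounds up to
`(q-1)q^(m-1-i)`. Summing, the two geometric series give `(q^m - 1) - (q^r - 1)`. -/

open Finset

theorem Nat.pred_mul_geom_sum (q n : ℕ) : (q - 1) * ∑ i ∈ range n, q ^ i = q ^ n - 1 := by
  rcases q with _ | q
  · cases n <;> simp
  · have h1 : 1 ≤ (q + 1) ^ n := Nat.one_le_pow _ _ q.succ_pos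
    zify [h1]
    simpa using mul_geom_sum (q + 1 : ℤ) n

theorem Nat.sum_range_pred_mul_pow_reflect (q n : ℕ) :
    ∑ i ∈ range n, (q - 1) * q ^ (n - 1 - i) = q ^ n - 1 := by
  rw [sum_range_reflect (fun j => (q - 1) * q ^ j) n, ← mul_sum, Nat.pred_mul_geom_sum]

theorem Nat.mul_sub_add_pred_div {a b : ℕ} (c : ℕ) (hab : a < b) :
    (b * c - a + b - 1) / b = c := by
  rcases c with _ | c
  · simp [Nat.div_eq_of_lt (by omega : b - 1 < b)]
  · have hb : b ≤ b * (c + 1) := Nat.le_mul_of_pos_right b c.succ_pos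
    have : b * (c + 1) - a + b - 1 = (b - 1 - a) + b * (c + 1) := by omega
    rw [this, Nat.add_mul_div_left _ _ (by omega), Nat.div_eq_of_lt (by omega), zero_add]

section GriesmerSummand

variable {q r m i : ℕ}

theorem griesmer_summand_eq_of_lt (hq : 0 < q) (hir : i < r) (hrm : r ≤ m) :
    ((q - 1) * (q ^ (m - 1) - q ^ (r - 1)) + q ^ i - 1) / q ^ i
      = (q - 1) * q ^ (m - 1 - i) - (q - 1) * q ^ (r - 1 - i) := by
  have hpow {n : ℕ} (hin : i ≤ n) : q ^ i * ((q - 1) * q ^ (n - i)) = (q - 1) * q ^ n := by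
    rw [mul_left_comm, ← pow_add, Nat.add_sub_cancel' hin]
  conv_lhs => rw [Nat.mul_sub, ← hpow (n := m - 1) (by omega), ← hpow (n := r - 1) (by omega),
    ← Nat.mul_sub, ← Nat.sub_zero (q ^ i * _)]
  exact Nat.mul_sub_add_pred_div _ (Nat.pow_pos hq)

theorem griesmer_summand_eq_of_le (hq : 0 < q) (hr : 1 ≤ r) (hri : r ≤ i) (him : i < m) :
    ((q - 1) * (q ^ (m - 1) - q ^ (r - 1)) + q ^ i - 1) / q ^ i = (q - 1) * q ^ (m - 1 - i) := by
  have hpow : q ^ i * ((q - 1) * q ^ (m - 1 - i)) = (q - 1) * q ^ (m - 1) := by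
    rw [mul_left_comm, ← pow_add, Nat.add_sub_cancel' (by omega)]
  have hlt : (q - 1) * q ^ (r - 1) < q ^ i :=
    calc (q - 1) * q ^ (r - 1) < q * q ^ (r - 1) :=
          Nat.mul_lt_mul_of_pos_right (by omega) (Nat.pow_pos hq)
    _ = q ^ r := by rw [← pow_succ', Nat.sub_add_cancel hr]
    _ ≤ q ^ i := Nat.pow_le_pow_right hq hri
  rw [Nat.mul_sub, ← hpow]
  exact Nat.mul_sub_add_pred_div _ hlt

end GriesmerSummand

theorem stmt_5_general (q r m : ℕ) (hq : IsPrimePow q) (hr : 1 ≤ r) (hrm : r < m) :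
    ∑ i ∈ Finset.range m, ((q - 1) * (q ^ (m - 1) - q ^ (r - 1)) + q ^ i - 1) / q ^ i
      = q ^ m - q ^ r := by
  have hq : 0 < q := hq.pos
  have hle : ∀ i ∈ range r, (q - 1) * q ^ (r - 1 - i) ≤ (q - 1) * q ^ (m - 1 - i) := fun i _ =>
    Nat.mul_le_mul_left _ (Nat.pow_le_pow_right hq (by omega))
  have hsplit : ∑ i ∈ range r, (q - 1) * q ^ (m - 1 - i) + ∑ i ∈ Ico r m, (q - 1) * q ^ (m - 1 - i)
      = q ^ m - 1 := by
    rw [sum_range_add_sum_Ico _ hrm.le, Nat.sum_range_pred_mul_pow_reflect]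
  have hsub : q ^ r - 1 ≤ ∑ i ∈ range r, (q - 1) * q ^ (m - 1 - i) :=
    Nat.sum_range_pred_mul_pow_reflect q r ▸ sum_le_sum hle
  rw [← sum_range_add_sum_Ico _ hrm.le,
    sum_congr rfl fun i hi => griesmer_summand_eq_of_lt hq (mem_range.1 hi) hrm.le,
    sum_congr rfl fun i hi => griesmer_summand_eq_of_le hq hr (mem_Ico.1 hi).1 (mem_Ico.1 hi).2,
    sum_tsub_distrib _ hle, Nat.sum_range_pred_mul_pow_reflect q r]
  have hqr : 1 ≤ q ^ r := Nat.one_le_pow r q hq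
  omega

theorem stmt_5 (q r m : ℕ) (hq : IsPrimePow q) (hr : 1 ≤ r) (hrm : r < m) (hdvd : r ∣ m) :
    ∑ i ∈ Finset.range m, ((q - 1) * (q ^ (m - 1) - q ^ (r - 1)) + q ^ i - 1) / q ^ i
      = q ^ m - q ^ r :=
  stmt_5_general q r m hq hr hrm
end

section
/- Let q ≥ 2 be a prime power, m > 1, and 1 ≤ r_1 < r_2 < ... < r_h < m. Then ∑_{i=0}^{m-1} ⌈(q−1)(q^{m−1} − ∑_{j=1}^h q^{r_j−1})/q^i⌉ = q^m − ∑_{j=1}^h q^{r_j} + h − 1, provided ∑_{j=1}^h q^{r_j} < q^{m-1}·(q-1)·q/(q-1) in the sense that the distance (q−1)(q^{m−1} − ∑ q^{r_j−1}) is positive. -/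
/-!
Write `S = ∑_{e ∈ s} q^e` over the distinct exponents `e = r_j - 1 < m - 1` and split
`S = q^i H_i + L_i` according to `e ≥ i` or `e < i`. The low exponents are distinct and below `i`,
so `(q - 1) L_i < q^i`, and hence `⌈(q - 1)(q^{m-1} - S) / q^i⌉ = (q - 1)(q^{m-1-i} - H_i)` exactly.
Summing over `i < m`, the first parts add up to `q^m - 1`, while each exponent `e` contributes
`(q - 1)(1 + q + ⋯ + q^e) = q^{e+1} - 1` to the second.
-/

open Finset

namespace Nat

theorem sub_one_mul_geomSum_add_one {q : ℕ} (hq : 0 < q) (n : ℕ) :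
    (q - 1) * ∑ i ∈ range n, q ^ i + 1 = q ^ n := by
  have h := geom_sum_mul_add (q - 1) n
  rwa [Nat.sub_one_add_one hq.ne', mul_comm] at h

theorem sub_one_mul_sum_pow_lt {q n : ℕ} (hq : 0 < q) {s : Finset ℕ} (hs : ∀ e ∈ s, e < n) :
    (q - 1) * ∑ e ∈ s, q ^ e < q ^ n := by
  have hsub : ∑ e ∈ s, q ^ e ≤ ∑ e ∈ range n, q ^ e :=
    sum_le_sum_of_subset fun e he ↦ mem_range.2 (hs e he)
  have := sub_one_mul_geomSum_add_one hq n
  have := Nat.mul_le_mul_left (q - 1) hsub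
  omega

theorem add_sub_one_div_eq_of_add_eq {a b c k : ℕ} (hc : c < b) (h : a + c = b * k) :
    (a + b - 1) / b = k := by
  apply Nat.div_eq_of_lt_le
  · rw [mul_comm]
    omega
  · rw [Nat.succ_mul, mul_comm]
    omega

end Nat

def griesmer (q m d : ℕ) : ℕ := ∑ i ∈ range m, (d + q ^ i - 1) / q ^ i

section Griesmer

def highPart (q : ℕ) (s : Finset ℕ) (i : ℕ) : ℕ := ∑ e ∈ s with i ≤ e, q ^ (e - i)

theorem pow_mul_highPart_add (q : ℕ) (s : Finset ℕ) (i : ℕ) :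
    q ^ i * highPart q s i + ∑ e ∈ s with e < i, q ^ e = ∑ e ∈ s, q ^ e := by
  have hhigh : q ^ i * highPart q s i = ∑ e ∈ s with i ≤ e, q ^ e := by
    rw [highPart, mul_sum]
    refine sum_congr rfl fun e he ↦ ?_
    rw [← pow_add, Nat.add_sub_cancel' (mem_filter.1 he).2]
  simp only [hhigh, ← not_le]
  exact sum_filter_add_sum_filter_not s _ _

variable {q m : ℕ} {s : Finset ℕ}

theorem sub_one_mul_sum_highPart_add_card (hq : 0 < q) (hs : ∀ e ∈ s, e < m) :
    (q - 1) * ∑ i ∈ range m, highPart q s i + #s = ∑ e ∈ s, q ^ (e + 1) := by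
  have hswap : ∑ i ∈ range m, highPart q s i = ∑ e ∈ s, ∑ t ∈ range (e + 1), q ^ t := by
    simp only [highPart, sum_filter]
    rw [sum_comm]
    refine sum_congr rfl fun e he ↦ ?_
    rw [← sum_filter, ← sum_range_reflect]
    refine sum_congr ?_ fun i hi ↦ ?_
    · ext i
      simp only [mem_filter, mem_range]
      have := hs e he
      omega
    · simp only [mem_range] at hi
      congr 1
  rw [hswap, mul_sum, card_eq_sum_ones, ← sum_add_distrib]
  exact sum_congr rfl fun e _ ↦ Nat.sub_one_mul_geomSum_add_one hq (e + 1)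

theorem pow_sub_one_eq_pow_mul_pow_sub {i : ℕ} (hi : i < m) :
    q ^ (m - 1) = q ^ i * q ^ (m - 1 - i) := by
  rw [← pow_add, Nat.add_sub_cancel' (by omega)]

theorem sum_pow_le_pow_sub_one (hq : 2 ≤ q) (hs : ∀ e ∈ s, e + 1 < m) :
    ∑ e ∈ s, q ^ e ≤ q ^ (m - 1) :=
  (Nat.geomSum_lt hq fun e he ↦ by have := hs e he; omega).le

theorem highPart_le (hq : 2 ≤ q) (hs : ∀ e ∈ s, e + 1 < m) {i : ℕ} (hi : i < m) :
    highPart q s i ≤ q ^ (m - 1 - i) := by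
  refine Nat.le_of_mul_le_mul_left (c := q ^ i) ?_ (Nat.pow_pos (by omega))
  rw [← pow_sub_one_eq_pow_mul_pow_sub hi]
  exact (pow_mul_highPart_add q s i ▸ Nat.le_add_right _ _).trans (sum_pow_le_pow_sub_one hq hs)

theorem ceilDiv_pow_eq_sub_one_mul_sub_highPart (hq : 2 ≤ q) (hs : ∀ e ∈ s, e + 1 < m)
    {i : ℕ} (hi : i < m) :
    ((q - 1) * (q ^ (m - 1) - ∑ e ∈ s, q ^ e) + q ^ i - 1) / q ^ i
      = (q - 1) * (q ^ (m - 1 - i) - highPart q s i) := by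
  have hsplit := pow_mul_highPart_add q s i
  have hlow : (q - 1) * ∑ e ∈ s with e < i, q ^ e < q ^ i :=
    Nat.sub_one_mul_sum_pow_lt (by omega) fun e he ↦ (mem_filter.1 he).2
  have hS := sum_pow_le_pow_sub_one hq hs
  have hpow : q ^ (m - 1) = q ^ i * q ^ (m - 1 - i) := pow_sub_one_eq_pow_mul_pow_sub hi
  have hH := highPart_le hq hs hi
  apply Nat.add_sub_one_div_eq_of_add_eq hlow
  generalize ∑ e ∈ s with e < i, q ^ e = L at hsplit
  generalize ∑ e ∈ s, q ^ e = S at hsplit hS ⊢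
  generalize highPart q s i = H at hsplit hH ⊢
  zify [hS, hH, (by omega : 1 ≤ q)] at hsplit hpow ⊢
  linear_combination (↑q - 1) * (hpow + hsplit)

theorem griesmer_sub_one_mul_pow_sub_sum_pow (hq : 2 ≤ q) (hs : ∀ e ∈ s, e + 1 < m) :
    griesmer q m ((q - 1) * (q ^ (m - 1) - ∑ e ∈ s, q ^ e))
      = q ^ m - ∑ e ∈ s, q ^ (e + 1) + #s - 1 := by
  rw [griesmer,
    sum_congr rfl fun i hi ↦ ceilDiv_pow_eq_sub_one_mul_sub_highPart hq hs (mem_range.1 hi)]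
  have hsum : ∑ i ∈ range m, (q - 1) * (q ^ (m - 1 - i) - highPart q s i)
      + (q - 1) * ∑ i ∈ range m, highPart q s i + 1 = q ^ m := by
    rw [mul_sum, ← sum_add_distrib]
    rw [sum_congr rfl fun i hi ↦ by
      rw [← mul_add, Nat.sub_add_cancel (highPart_le hq hs (mem_range.1 hi))]]
    rw [sum_range_reflect (fun t ↦ (q - 1) * q ^ t) m, ← mul_sum]
    exact Nat.sub_one_mul_geomSum_add_one (by omega) m
  have hhigh := sub_one_mul_sum_highPart_add_card (m := m) (by omega : 0 < q) fun e he ↦ by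
    have := hs e he; omega
  have hT : ∑ e ∈ s, q ^ (e + 1) < q ^ m := by
    have := Nat.geomSum_lt hq (s := s.map (addRightEmbedding 1)) (n := m) (by simpa using hs)
    rwa [sum_map] at this
  omega

end Griesmer

theorem stmt_6_general (q m h : ℕ) (hq : IsPrimePow q)
    (r : Fin h → ℕ) (hmono : StrictMono r) (hr1 : ∀ j, 1 ≤ r j) (hrm : ∀ j, r j < m) :
    ∑ i ∈ Finset.range m,
        ((q - 1) * (q ^ (m - 1) - ∑ j, q ^ (r j - 1)) + q ^ i - 1) / q ^ i
      = q ^ m - (∑ j, q ^ (r j)) + h - 1 := by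
  have hinj : Function.Injective fun j ↦ r j - 1 := fun j k hjk ↦ by
    have := hr1 j; have := hr1 k
    exact hmono.injective (by simp only at hjk; omega)
  have hs : ∀ e ∈ univ.image fun j ↦ r j - 1, e + 1 < m := by
    simp only [mem_image, mem_univ, true_and, forall_exists_index, forall_apply_eq_imp_iff]
    exact fun j ↦ by have := hr1 j; have := hrm j; omega
  have key := griesmer_sub_one_mul_pow_sub_sum_pow hq.two_le hs
  rw [sum_image hinj.injOn, sum_image hinj.injOn, card_image_of_injective _ hinj, card_univ,
    Fintype.card_fin] at key
  simp only [Nat.sub_add_cancel (hr1 _)] at key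
  exact key

theorem stmt_6 (q m h : ℕ) (hq : IsPrimePow q) (hm : 1 < m)
    (r : Fin h → ℕ) (hmono : StrictMono r) (hr1 : ∀ j, 1 ≤ r j) (hrm : ∀ j, r j < m)
    (hpos : 0 < (q - 1) * (q ^ (m - 1) - ∑ j, q ^ (r j - 1))) :
    ∑ i ∈ Finset.range m,
        ((q - 1) * (q ^ (m - 1) - ∑ j, q ^ (r j - 1)) + q ^ i - 1) / q ^ i
      = q ^ m - (∑ j, q ^ (r j)) + h - 1 :=
  stmt_6_general q m h hq r hmono hr1 hrm
end

section
/- Let q be a prime power and r_1, r_2, m positive integers with r_1 | m, r_2 | m and t = gcd(r_1, r_2). Then the number of x ∈ F_{q^m} with Tr_{F_{q^m}/F_{q^{r_1}}}(x) = 0 and Tr_{F_{q^m}/F_{q^{r_2}}}(x) = 0 equals q^{m − r_1 − r_2 + t}. -/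
/-!
Write `℘ y = y ^ |E₁| - y` for the Artin–Schreier map of `K/E₁`. Its kernel is `E₁`, so its image
has `|K| / |E₁|` elements and is therefore the whole kernel of `Tr_{K/E₁}` (additive Hilbert 90).
Hence the `y` with `℘ y` in both trace kernels number `N · |E₁|`, where `N` is the count sought.
Since `Tr_{K/E₂}` commutes with `y ↦ y ^ |E₁|`, they are also the preimage under `Tr_{K/E₂}` of
`{b ∈ E₂ | b ^ q ^ r₁ = b} = {b ∈ E₂ | b ^ q ^ gcd(r₁, r₂) = b}`, which has `q ^ gcd(r₁, r₂)`
elements, and so they number `q ^ gcd(r₁, r₂) · |K| / |E₂|`.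
-/

open Finset Polynomial

theorem Nat.eq_pow_sub_of_mul_pow_eq_pow {q a b N : ℕ} (hq : 1 < q) (h : N * q ^ a = q ^ b) :
    N = q ^ (b - a) := by
  have hab : a ≤ b := (Nat.pow_dvd_pow_iff_le_right hq).1 ⟨N, by rw [← h, mul_comm]⟩
  apply Nat.eq_of_mul_eq_mul_right (pow_pos (Nat.zero_lt_of_lt hq) a)
  rw [h, ← pow_add, Nat.sub_add_cancel hab]

theorem pow_pow_gcd_eq_self_iff {M : Type*} [Monoid M] {x : M} {q a b : ℕ}
    (hb : x ^ q ^ b = x) : x ^ q ^ Nat.gcd a b = x ↔ x ^ q ^ a = x := by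
  have periodic_iff (n : ℕ) : Function.IsPeriodicPt (· ^ q) n x ↔ x ^ q ^ n = x := by
    rw [Function.IsPeriodicPt, Function.IsFixedPt, pow_iterate]
  rw [← periodic_iff, ← periodic_iff]
  exact ⟨fun h ↦ h.trans_dvd (Nat.gcd_dvd_left a b), fun h ↦ h.gcd ((periodic_iff b).2 hb)⟩

theorem Polynomial.X_pow_sub_X_dvd {R : Type*} [CommRing R] {n k : ℕ} (hn : 0 < n) (hk : 0 < k)
    (h : n - 1 ∣ k - 1) : (X ^ n - X : R[X]) ∣ X ^ k - X := by
  have factor (j : ℕ) (hj : 0 < j) : (X ^ j - X : R[X]) = X * (X ^ (j - 1) - 1) := by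
    rw [mul_sub, mul_one, ← pow_succ', Nat.sub_add_cancel hj]
  rw [factor n hn, factor k hk]
  exact mul_dvd_mul_left X (dvd_pow_sub_one_of_dvd h)

theorem AddMonoidHom.card_filter_mem_eq_mul {G H F : Type*} [AddGroup G] [Fintype G]
    [AddMonoid H] [DecidableEq H] [FunLike F G H] [AddMonoidHomClass F G H] (f : F)
    (S : Finset H) (hS : ∀ s ∈ S, s ∈ Set.range f) :
    #{x | f x ∈ S} = #S * #{x | f x = 0} := by
  rw [card_eq_sum_card_fiberwise (s := {x | f x ∈ S}) (t := S) fun x hx ↦ (mem_filter.1 hx).2,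
    ← smul_eq_mul, ← sum_const]
  refine sum_congr rfl fun s hs ↦ ?_
  rw [filter_filter, ← card_fiber_eq_of_mem_range f (hS s hs) ⟨0, map_zero f⟩]
  congr 1
  exact filter_congr fun x _ ↦ ⟨And.right, fun h ↦ ⟨h ▸ hs, h⟩⟩

namespace FiniteField

theorem card_filter_pow_eq_self {F : Type*} [Field F] [Fintype F] [DecidableEq F]
    {n : ℕ} (hn : 0 < n) (h : n - 1 ∣ Fintype.card F - 1) : #{x : F | x ^ n = x} = n := by
  have hF := Fintype.one_lt_card (α := F)
  have hn1 : 1 < n := by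
    by_contra hn1
    obtain rfl : n = 1 := by omega
    have := Nat.eq_zero_of_zero_dvd h
    omega
  have hne : (X ^ Fintype.card F - X : F[X]) ≠ 0 := X_pow_card_sub_X_ne_zero F hF
  have hdvd : (X ^ n - X : F[X]) ∣ X ^ Fintype.card F - X := X_pow_sub_X_dvd hn (by omega) h
  have hsplits : Splits (X ^ Fintype.card F - X : F[X]) :=
    Nat.card_eq_fintype_card (α := F) ▸ Polynomial.splits_X_pow_nat_card_sub_X
  have hnodup : (X ^ n - X : F[X]).roots.Nodup := by
    refine Multiset.nodup_of_le (roots.le_of_dvd hne hdvd) ?_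
    rw [roots_X_pow_card_sub_X]
    exact Finset.univ.nodup
  have hroots : ({x : F | x ^ n = x} : Finset F) = (X ^ n - X : F[X]).roots.toFinset := by
    ext x
    simp [mem_roots (X_pow_card_sub_X_ne_zero F hn1), sub_eq_zero]
  rw [hroots, Multiset.toFinset_card_of_nodup hnodup,
    splits_iff_card_roots.1 (hsplits.of_dvd hne hdvd), X_pow_card_sub_X_natDegree_eq F hn1]

theorem card_filter_pow_pow_eq_self {F : Type*} [Field F] [Fintype F] [DecidableEq F]
    {q r s : ℕ} (hq : 0 < q) (hF : Fintype.card F = q ^ s) :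
    #{x : F | x ^ q ^ r = x} = q ^ Nat.gcd r s := by
  have hfix (x : F) : x ^ q ^ s = x := hF ▸ pow_card x
  rw [filter_congr fun x _ ↦ (pow_pow_gcd_eq_self_iff (hfix x)).symm]
  exact card_filter_pow_eq_self (pow_pos hq _) (hF ▸ Nat.pow_sub_one_dvd_pow_sub_one q
    (Nat.gcd_dvd_right r s))

theorem trace_apply_pow_card (E F : Type*) {K : Type*} [Field E] [Fintype E] [Field F] [Field K]
    [Finite K] [Algebra E K] [Algebra F K] (x : K) :
    Algebra.trace F K (x ^ Fintype.card E) = Algebra.trace F K x ^ Fintype.card E := by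
  apply (algebraMap F K).injective
  have hφ (y : K) : frobeniusAlgEquivOfAlgebraic E K y = y ^ Fintype.card E := rfl
  rw [map_pow (algebraMap F K), algebraMap_trace_eq_sum_pow, algebraMap_trace_eq_sum_pow,
    ← hφ, ← hφ, map_sum]
  simp only [map_pow]

theorem card_filter_trace_eq_zero_mul_card (E K : Type*) [Field E] [Fintype E] [DecidableEq E]
    [Field K] [Fintype K] [Algebra E K] :
    #{x : K | Algebra.trace E K x = 0} * Fintype.card E = Fintype.card K := by
  have h := AddMonoidHom.card_filter_mem_eq_mul (Algebra.trace E K) univ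
    fun s _ ↦ Algebra.trace_surjective E K s
  simpa [mul_comm] using h.symm

end FiniteField

section ArtinSchreier

open FiniteField

variable (E K : Type*) [Field E] [Fintype E] [Field K] [Fintype K] [Algebra E K]

noncomputable def artinSchreier : K →+ K :=
  (frobeniusAlgEquivOfAlgebraic E K).toAddMonoidHom - AddMonoidHom.id K

variable {E K}

theorem artinSchreier_apply (y : K) : artinSchreier E K y = y ^ Fintype.card E - y := rfl

theorem trace_artinSchreier (y : K) : Algebra.trace E K (artinSchreier E K y) = 0 :=
  (map_sub _ _ _).trans (sub_eq_zero.2 (Algebra.trace_eq_of_algEquiv _ y))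

theorem card_filter_artinSchreier_eq_zero [DecidableEq K] :
    #{y : K | artinSchreier E K y = 0} = Fintype.card E := by
  simp_rw [artinSchreier_apply, sub_eq_zero]
  refine card_filter_pow_eq_self Fintype.card_pos ?_
  rw [Module.card_eq_pow_finrank (K := E) (V := K)]
  exact Nat.sub_one_dvd_pow_sub_one _ _

theorem mem_range_artinSchreier_iff (y : K) :
    y ∈ Set.range (artinSchreier E K) ↔ Algebra.trace E K y = 0 := by
  -- not `classical`: the lemmas above decide `_ = 0` through a `DecidableEq` instance
  let := Classical.decEq E
  let := Classical.decEq K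
  refine ⟨fun ⟨z, hz⟩ ↦ hz ▸ trace_artinSchreier z, fun hy ↦ ?_⟩
  have hsub : univ.image (artinSchreier E K) ⊆ ({x | Algebra.trace E K x = 0} : Finset K) := by
    intro x hx
    obtain ⟨z, -, rfl⟩ := mem_image.1 hx
    exact mem_filter.2 ⟨mem_univ _, trace_artinSchreier z⟩
  have hcard : #{x : K | Algebra.trace E K x = 0} ≤ #(univ.image (artinSchreier E K)) := by
    have h := AddMonoidHom.card_filter_mem_eq_mul (artinSchreier E K) (univ.image _)
      fun s hs ↦ by simpa using hs
    simp only [mem_image_of_mem _ (mem_univ _), filter_true, card_univ] at h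
    rw [← Nat.mul_le_mul_right_iff (Fintype.card_pos (α := E)),
      card_filter_trace_eq_zero_mul_card, h, card_filter_artinSchreier_eq_zero]
  have hy' := eq_of_subset_of_card_le hsub hcard ▸ mem_filter.2 ⟨mem_univ y, hy⟩
  simpa using hy'

end ArtinSchreier

open FiniteField in
theorem card_filter_traces_eq_zero_mul_card (E₁ E₂ K : Type*) [Field E₁] [Fintype E₁]
    [DecidableEq E₁] [Field E₂] [Fintype E₂] [DecidableEq E₂] [Field K] [Fintype K]
    [Algebra E₁ K] [Algebra E₂ K] :
    #{x : K | Algebra.trace E₁ K x = 0 ∧ Algebra.trace E₂ K x = 0} * Fintype.card E₁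
      = #{b : E₂ | b ^ Fintype.card E₁ = b} * #{x : K | Algebra.trace E₂ K x = 0} := by
  let := Classical.decEq K
  have hA := AddMonoidHom.card_filter_mem_eq_mul (artinSchreier E₁ K)
    {x | Algebra.trace E₁ K x = 0 ∧ Algebra.trace E₂ K x = 0}
    fun s hs ↦ (mem_range_artinSchreier_iff s).2 (mem_filter.1 hs).2.1
  have hB := AddMonoidHom.card_filter_mem_eq_mul (Algebra.trace E₂ K)
    {b | b ^ Fintype.card E₁ = b} fun s _ ↦ Algebra.trace_surjective E₂ K s
  rw [card_filter_artinSchreier_eq_zero] at hA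
  rw [← hA, ← hB]
  congr 1
  refine filter_congr fun y _ ↦ ?_
  simp only [mem_filter, mem_univ, true_and]
  rw [trace_artinSchreier, eq_self, true_and, artinSchreier_apply, map_sub, trace_apply_pow_card,
    sub_eq_zero]

theorem stmt_8_general (q r₁ r₂ m : ℕ) (E₁ E₂ K : Type*)
    [Field E₁] [Fintype E₁] [Field E₂] [Fintype E₂] [Field K] [Fintype K]
    [Algebra E₁ K] [Algebra E₂ K]
    (hE₁ : Fintype.card E₁ = q ^ r₁) (hE₂ : Fintype.card E₂ = q ^ r₂)
    (hK : Fintype.card K = q ^ m) :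
    Nat.card {x : K // Algebra.trace E₁ K x = 0 ∧ Algebra.trace E₂ K x = 0}
      = q ^ (m + Nat.gcd r₁ r₂ - (r₁ + r₂)) := by
  let := Classical.decEq E₁
  let := Classical.decEq E₂
  have hq : 1 < q :=
    lt_of_pow_lt_pow_left₀ m (Nat.zero_le q) (by rw [one_pow, ← hK]; exact Fintype.one_lt_card)
  have hfix := FiniteField.card_filter_pow_pow_eq_self (r := r₁) (Nat.zero_lt_of_lt hq) hE₂
  have hcount := card_filter_traces_eq_zero_mul_card E₁ E₂ K
  have hker := FiniteField.card_filter_trace_eq_zero_mul_card E₂ K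
  rw [Nat.card_eq_fintype_card, Fintype.card_subtype]
  refine Nat.eq_pow_sub_of_mul_pow_eq_pow hq ?_
  set N := #{x : K | Algebra.trace E₁ K x = 0 ∧ Algebra.trace E₂ K x = 0}
  set N₂ := #{x : K | Algebra.trace E₂ K x = 0}
  calc N * q ^ (r₁ + r₂) = N * Fintype.card E₁ * Fintype.card E₂ := by
        rw [hE₁, hE₂, pow_add, mul_assoc]
    _ = q ^ Nat.gcd r₁ r₂ * (N₂ * Fintype.card E₂) := by rw [hcount, hE₁, hfix, mul_assoc]
    _ = q ^ (m + Nat.gcd r₁ r₂) := by rw [hker, hK, ← pow_add, add_comm]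

theorem stmt_8 (q r₁ r₂ m : ℕ) (E₁ E₂ K : Type*)
    [Field E₁] [Fintype E₁] [Field E₂] [Fintype E₂] [Field K] [Fintype K]
    [Algebra E₁ K] [Algebra E₂ K]
    (hE₁ : Fintype.card E₁ = q ^ r₁) (hE₂ : Fintype.card E₂ = q ^ r₂)
    (hK : Fintype.card K = q ^ m) (hq : IsPrimePow q)
    (h₁ : 0 < r₁) (h₂ : 0 < r₂) (hd₁ : r₁ ∣ m) (hd₂ : r₂ ∣ m) :
    Nat.card {x : K // Algebra.trace E₁ K x = 0 ∧ Algebra.trace E₂ K x = 0}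
      = q ^ (m + Nat.gcd r₁ r₂ - (r₁ + r₂)) :=
  stmt_8_general q r₁ r₂ m E₁ E₂ K hE₁ hE₂ hK
end

section
/- Let q be a prime power, r | m, r < m, and D = F_{q^m} \ F_{q^r}. For a ∈ F_{q^m}*, the number of x ∈ D with Tr_{F_{q^m}/F_q}(a x) ≠ 0 equals (q−1)q^{m−1} if Tr_{F_{q^m}/F_{q^r}}(a) = 0, and equals (q−1)(q^{m−1} − q^{r−1}) otherwise. Consequently, the code C_D = {(Tr_{F_{q^m}/F_q}(ax))_{x∈D} : a ∈ F_{q^m}} is a two-weight [q^m − q^r, m] linear code with minimum distance (q−1)(q^{m−1} − q^{r−1}). -/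
/-! For `a ≠ 0` the functional `x ↦ Tr_{K/F}(a x)` maps `K` onto `F`, so it is nonzero at exactly
`(q - 1) q^(m - 1)` points. By transitivity of the trace, its restriction to `E` is
`y ↦ Tr_{E/F}(b y)` with `b = Tr_{K/E}(a)`: this vanishes identically if `b = 0` and is nonzero
at `(q - 1) q^(r - 1)` points otherwise, and subtracting gives the two weights. Both occur, because
`Tr_{K/E}` maps `K` onto `E` but cannot be injective since `|E| < |K|`. Since every weight is
positive, `a ↦ c_a` is injective. -/

open Finset

namespace AddMonoidHom

variable {G H : Type*} [AddGroup G] [Fintype G] [AddGroup H] [Fintype H]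

lemma card_filter_eq_zero_mul_card [DecidableEq H] (f : G →+ H) (hf : Function.Surjective f) :
    #{g | f g = 0} * Fintype.card H = Fintype.card G := by
  rw [mul_comm, ← smul_eq_mul, ← card_univ (α := H), ← sum_const, ← card_univ (α := G),
    card_eq_sum_card_fiberwise (s := univ) (t := univ) (f := f) (by simp)]
  exact sum_congr rfl fun h _ ↦ card_fiber_eq_of_mem_range f (hf 0) (hf h)

lemma card_filter_ne_zero_of_card_eq_pow [DecidableEq H] (f : G →+ H)
    (hf : Function.Surjective f) {q n : ℕ} (hH : Fintype.card H = q)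
    (hG : Fintype.card G = q ^ n) (hn : 1 ≤ n) :
    #{g | f g ≠ 0} = (q - 1) * q ^ (n - 1) := by
  have hq : 0 < q := hH ▸ Fintype.card_pos
  obtain ⟨k, rfl⟩ : ∃ k, n = k + 1 := ⟨n - 1, by omega⟩
  have hker : #{g | f g = 0} = q ^ k := by
    have := f.card_filter_eq_zero_mul_card hf
    rw [hH, hG, pow_succ] at this
    exact Nat.eq_of_mul_eq_mul_right hq this
  have hsplit := card_filter_add_card_filter_not (s := univ) (fun g ↦ f g = 0)
  rw [card_univ, hG, hker, pow_succ] at hsplit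
  rw [Nat.add_sub_cancel, Nat.sub_one_mul]
  exact Nat.eq_sub_of_add_eq' (by simpa [mul_comm] using hsplit)

lemma exists_ne_zero_map_eq_zero_of_card_lt (f : G →+ H)
    (h : Fintype.card H < Fintype.card G) : ∃ g ≠ 0, f g = 0 := by
  obtain ⟨x, y, hxy, hf⟩ := Fintype.exists_ne_map_eq_of_card_lt f h
  exact ⟨x - y, sub_ne_zero.2 hxy, by rw [map_sub, hf, sub_self]⟩

end AddMonoidHom

lemma Finset.card_filter_notMem_range {α β : Type*} [Fintype α] [Fintype β] [DecidableEq β]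
    {f : α → β} (hf : Function.Injective f) :
    #{y | y ∉ Set.range f} = Fintype.card β - Fintype.card α := by
  have hrange : #{y | y ∈ Set.range f} = Fintype.card α := by
    rw [← card_univ, ← card_map ⟨f, hf⟩]
    congr 1
    ext y
    simp [eq_comm]
  rw [← card_univ, ← card_filter_add_card_filter_not (s := univ) (· ∈ Set.range f), hrange,
    Nat.add_sub_cancel_left]

lemma Finset.card_image_eq_two_of_eq_ite {α β : Type*} [DecidableEq β] {s : Finset α}
    {f : α → β} {p : α → Prop} [DecidablePred p] {u v : β}
    (hf : ∀ a ∈ s, f a = if p a then u else v) (hu : ∃ a ∈ s, p a) (hv : ∃ a ∈ s, ¬p a)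
    (huv : u ≠ v) : #(s.image f) = 2 := by
  suffices s.image f = {u, v} by rw [this, card_pair huv]
  refine Subset.antisymm (fun w hw ↦ ?_) ?_
  · obtain ⟨a, ha, rfl⟩ := mem_image.1 hw
    rw [hf a ha]
    split_ifs <;> simp
  · obtain ⟨a, ha, hpa⟩ := hu
    obtain ⟨b, hb, hpb⟩ := hv
    rw [insert_subset_iff, singleton_subset_iff]
    exact ⟨mem_image.2 ⟨a, ha, by simp [hf a ha, hpa]⟩,
      mem_image.2 ⟨b, hb, by simp [hf b hb, hpb]⟩⟩

open scoped Classical in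
lemma injective_trace_mul_of_card_filter_pos {F K : Type*} [Field F] [Field K] [Algebra F K]
    (D : Finset K) (hD : ∀ a ≠ 0, 0 < #{x ∈ D | Algebra.trace F K (a * x) ≠ 0}) :
    Function.Injective (fun a : K => fun x : {x // x ∈ D} => Algebra.trace F K (a * x.1)) := by
  intro a b hab
  by_contra hne
  obtain ⟨x, hx⟩ := card_pos.1 (hD (a - b) (sub_ne_zero.2 hne))
  rw [mem_filter, sub_mul, map_sub, sub_ne_zero] at hx
  exact hx.2 (congrFun hab ⟨x, hx.1⟩)

section FiniteField

open scoped Classical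

variable {F E K : Type*} [Field F] [Field E] [Fintype E] [Field K] [Fintype K]

lemma card_filter_trace_mul_ne_zero [Fintype F] [Algebra F K] {a : K} (ha : a ≠ 0) {q n : ℕ}
    (hF : Fintype.card F = q) (hK : Fintype.card K = q ^ n) (hn : 1 ≤ n) :
    #{x : K | Algebra.trace F K (a * x) ≠ 0} = (q - 1) * q ^ (n - 1) := by
  let f : K →+ F := (Algebra.trace F K).toAddMonoidHom.comp (AddMonoidHom.mulLeft a)
  have hf : Function.Surjective f :=
    (Algebra.trace_surjective F K).comp (mulLeft_bijective₀ a ha).surjective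
  exact f.card_filter_ne_zero_of_card_eq_pow hf hF hK hn

variable [Algebra F E] [Algebra E K] [Algebra F K] [IsScalarTower F E K]

lemma trace_mul_algebraMap (a : K) (y : E) :
    Algebra.trace F K (a * algebraMap E K y) = Algebra.trace F E (Algebra.trace E K a * y) := by
  rw [← Algebra.trace_trace (S := E), mul_comm a, ← Algebra.smul_def, map_smul, smul_eq_mul,
    mul_comm]

lemma card_filter_notMem_range_trace_mul_ne_zero_add (a : K) :
    #{x ∈ univ.filter (fun x ↦ x ∉ Set.range (algebraMap E K)) |
        Algebra.trace F K (a * x) ≠ 0} +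
      #{y : E | Algebra.trace F E (Algebra.trace E K a * y) ≠ 0} =
      #{x : K | Algebra.trace F K (a * x) ≠ 0} := by
  have hsub : #{y : E | Algebra.trace F E (Algebra.trace E K a * y) ≠ 0} =
      #{x ∈ univ.filter (fun x ↦ Algebra.trace F K (a * x) ≠ 0) |
        ¬x ∉ Set.range (algebraMap E K)} := by
    rw [← card_map ⟨algebraMap E K, (algebraMap E K).injective⟩]
    congr 1
    ext x
    simp only [mem_filter, mem_univ, true_and, not_not, Set.mem_range, mem_map,
      Function.Embedding.coeFn_mk]
    constructor
    · rintro ⟨y, hy, rfl⟩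
      exact ⟨by rwa [trace_mul_algebraMap], y, rfl⟩
    · rintro ⟨hx, y, rfl⟩
      exact ⟨y, by rwa [← trace_mul_algebraMap], rfl⟩
  rw [hsub, filter_filter, filter_filter, ← card_filter_add_card_filter_not
    (s := univ.filter (fun x ↦ Algebra.trace F K (a * x) ≠ 0))
    (· ∉ Set.range (algebraMap E K)), filter_filter, filter_filter]
  simp only [and_comm]

lemma card_filter_notMem_range_trace_mul_ne_zero [Fintype F] {q r m : ℕ}
    (hF : Fintype.card F = q) (hE : Fintype.card E = q ^ r) (hK : Fintype.card K = q ^ m)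
    (hr : 1 ≤ r) (hm : 1 ≤ m) {a : K} (ha : a ≠ 0) :
    #{x ∈ univ.filter (fun x ↦ x ∉ Set.range (algebraMap E K)) |
        Algebra.trace F K (a * x) ≠ 0} =
      if Algebra.trace E K a = 0 then (q - 1) * q ^ (m - 1)
      else (q - 1) * (q ^ (m - 1) - q ^ (r - 1)) := by
  have hsplit := card_filter_notMem_range_trace_mul_ne_zero_add (F := F) (E := E) a
  rw [card_filter_trace_mul_ne_zero ha hF hK hm] at hsplit
  split_ifs with hb
  · simpa [hb] using hsplit
  · rw [card_filter_trace_mul_ne_zero hb hF hE hr] at hsplit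
    rw [Nat.mul_sub]
    exact Nat.eq_sub_of_add_eq hsplit

end FiniteField

open scoped Classical in
theorem stmt_10_general (q r m : ℕ) (F E K : Type*) [Field F] [Fintype F] [Field E] [Fintype E]
    [Field K] [Fintype K] [Algebra F E] [Algebra E K] [Algebra F K] [IsScalarTower F E K]
    (hq : Fintype.card F = q) (hE : Fintype.card E = q ^ r) (hK : Fintype.card K = q ^ m)
    (hr : 1 ≤ r) (hrm : r < m)
    (D : Finset K) (hD : D = Finset.univ.filter (fun x => x ∉ Set.range (algebraMap E K)))
    (wt : K → ℕ)
    (hwt : ∀ a, wt a = (D.filter (fun x => Algebra.trace F K (a * x) ≠ 0)).card) :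
    (∀ a : K, a ≠ 0 →
        wt a = if Algebra.trace E K a = 0 then (q - 1) * q ^ (m - 1)
          else (q - 1) * (q ^ (m - 1) - q ^ (r - 1))) ∧
    D.card = q ^ m - q ^ r ∧
    Function.Injective (fun a : K => fun x : {x // x ∈ D} =>
      Algebra.trace F K (a * x.1)) ∧
    (∀ a : K, a ≠ 0 → (q - 1) * (q ^ (m - 1) - q ^ (r - 1)) ≤ wt a) ∧
    (∃ a : K, a ≠ 0 ∧ wt a = (q - 1) * (q ^ (m - 1) - q ^ (r - 1))) ∧
    ((Finset.univ.filter (fun a : K => a ≠ 0)).image wt).card = 2 := by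
  subst hD
  have hq2 : 2 ≤ q := hq ▸ Fintype.one_lt_card
  have hweight (a : K) (ha : a ≠ 0) := (hwt a).trans
    (card_filter_notMem_range_trace_mul_ne_zero hq hE hK hr (by omega) ha)
  have hpow : q ^ (r - 1) < q ^ (m - 1) := Nat.pow_lt_pow_right hq2 (by omega)
  have hlt : (q - 1) * (q ^ (m - 1) - q ^ (r - 1)) < (q - 1) * q ^ (m - 1) :=
    Nat.mul_lt_mul_of_pos_left (Nat.sub_lt (by positivity) (by positivity)) (by omega)
  have hmin (a : K) (ha : a ≠ 0) : (q - 1) * (q ^ (m - 1) - q ^ (r - 1)) ≤ wt a := by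
    rw [hweight a ha]
    split_ifs <;> omega
  obtain ⟨x₁, hx₁⟩ := Algebra.trace_surjective E K 1
  have hx₁₀ : x₁ ≠ 0 := by rintro rfl; simp at hx₁
  obtain ⟨x₀, hx₀, htr₀⟩ : ∃ x ≠ 0, Algebra.trace E K x = 0 :=
    (Algebra.trace E K).toAddMonoidHom.exists_ne_zero_map_eq_zero_of_card_lt
      (by rw [hE, hK]; exact Nat.pow_lt_pow_right hq2 hrm)
  refine ⟨hweight, ?_, ?_, hmin, ⟨x₁, hx₁₀, by simp [hweight x₁ hx₁₀, hx₁]⟩, ?_⟩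
  · rw [card_filter_notMem_range (algebraMap E K).injective, hK, hE]
  · refine injective_trace_mul_of_card_filter_pos _ fun a ha ↦ ?_
    rw [← hwt]
    exact (Nat.mul_pos (by omega) (Nat.sub_pos_of_lt hpow)).trans_le (hmin a ha)
  · exact card_image_eq_two_of_eq_ite (fun a ha ↦ hweight a (by simpa using ha))
      ⟨x₀, by simpa using hx₀, htr₀⟩ ⟨x₁, by simpa using hx₁₀, by simp [hx₁]⟩ hlt.ne'

open scoped Classical in
theorem stmt_10 (q r m : ℕ) (F E K : Type*) [Field F] [Fintype F] [Field E] [Fintype E]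
    [Field K] [Fintype K] [Algebra F E] [Algebra E K] [Algebra F K] [IsScalarTower F E K]
    (hq : Fintype.card F = q) (hE : Fintype.card E = q ^ r) (hK : Fintype.card K = q ^ m)
    (hr : 1 ≤ r) (hrm : r < m) (hdvd : r ∣ m)
    (D : Finset K) (hD : D = Finset.univ.filter (fun x => x ∉ Set.range (algebraMap E K)))
    (wt : K → ℕ)
    (hwt : ∀ a, wt a = (D.filter (fun x => Algebra.trace F K (a * x) ≠ 0)).card) :
    (∀ a : K, a ≠ 0 →
        wt a = if Algebra.trace E K a = 0 then (q - 1) * q ^ (m - 1)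
          else (q - 1) * (q ^ (m - 1) - q ^ (r - 1))) ∧
    D.card = q ^ m - q ^ r ∧
    Function.Injective (fun a : K => fun x : {x // x ∈ D} =>
      Algebra.trace F K (a * x.1)) ∧
    (∀ a : K, a ≠ 0 → (q - 1) * (q ^ (m - 1) - q ^ (r - 1)) ≤ wt a) ∧
    (∃ a : K, a ≠ 0 ∧ wt a = (q - 1) * (q ^ (m - 1) - q ^ (r - 1))) ∧
    ((Finset.univ.filter (fun a : K => a ≠ 0)).image wt).card = 2 :=
  stmt_10_general q r m F E K hq hE hK hr hrm D hD wt hwt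
end

section
/- Let q be a prime power with (q, r+s) ∉ {(2,1),(2,2),(3,1)}, let r | m, s | k, r < m, s < k, and D = (F_{q^m} \ F_{q^r}) × (F_{q^k} \ F_{q^s}). Then the linear code C_D = {(Tr_{F_{q^m}/F_q}(ax) + Tr_{F_{q^k}/F_q}(by))_{(x,y)∈D} : a ∈ F_{q^m}, b ∈ F_{q^k}} over F_q is self-orthogonal, i.e., C_D ⊆ C_D^⊥ with respect to the Euclidean inner product. -/
private lemma field_sum_zero (K : Type*) [Field K] [Fintype K]
    (h : Fintype.card K ≠ 2) : ∑ x : K, x = 0 := by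
  classical
  have h1 : 1 < Fintype.card K := Fintype.one_lt_card
  have h2 : 2 < Fintype.card K := by omega
  have hc : ∃ c : K, c ≠ 0 ∧ c ≠ 1 := by
    by_contra hcon
    push_neg at hcon
    have hsub : (Finset.univ : Finset K) ⊆ {0, 1} := by
      intro x _
      rcases eq_or_ne x 0 with h0 | h0
      · simp [h0]
      · simp [hcon x h0]
    have := Finset.card_le_card hsub
    have hle : ({0, 1} : Finset K).card ≤ 2 := by
      apply (Finset.card_insert_le _ _).trans
      simp
    simp only [Finset.card_univ] at this
    omega
  obtain ⟨c, hc0, hc1⟩ := hc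
  have key : c * ∑ x : K, x = ∑ x : K, x := by
    rw [Finset.mul_sum]
    exact Fintype.sum_equiv (Equiv.mulLeft₀ c hc0) (fun x => c * x) (fun x => x)
      (fun x => rfl)
  have h0 : (c - 1) * ∑ x : K, x = 0 := by
    rw [sub_mul, one_mul, key, sub_self]
  rcases mul_eq_zero.mp h0 with h' | h'
  · exact absurd (sub_eq_zero.mp h') hc1
  · exact h'

open scoped Classical in
private lemma sum_trace_compl {F E K : Type*} [Field F] [Field E] [Fintype E]
    [Field K] [Fintype K] [Algebra F K] [Algebra E K]
    (hK : Fintype.card K ≠ 2) (hE : Fintype.card E ≠ 2) (c : K) :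
    ∑ x ∈ Finset.univ.filter (fun x : K => x ∉ Set.range (algebraMap E K)),
      Algebra.trace F K (c * x) = 0 := by
  have hall : ∑ x : K, Algebra.trace F K (c * x) = 0 := by
    rw [← map_sum, ← Finset.mul_sum, field_sum_zero K hK, mul_zero, map_zero]
  have himg : Finset.univ.filter (fun x : K => x ∈ Set.range (algebraMap E K))
      = Finset.univ.image (algebraMap E K) := by
    ext x; simp
  have hsub : ∑ x ∈ Finset.univ.filter (fun x : K => x ∈ Set.range (algebraMap E K)),
      Algebra.trace F K (c * x) = 0 := by
    rw [himg, Finset.sum_image (fun a _ b _ h => (algebraMap E K).injective h),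
      ← map_sum, ← Finset.mul_sum, ← map_sum, field_sum_zero E hE, map_zero,
      mul_zero, map_zero]
  have hsplit := Finset.sum_filter_add_sum_filter_not (Finset.univ : Finset K)
    (fun x : K => x ∈ Set.range (algebraMap E K)) (fun x => Algebra.trace F K (c * x))
  rw [hsub, hall, zero_add] at hsplit
  exact hsplit

private lemma double_sum_expand {α β F : Type*} [CommRing F] (A : Finset α) (B : Finset β)
    (u u' : α → F) (v v' : β → F) :
    ∑ x ∈ A, ∑ y ∈ B, (u x + v y) * (u' x + v' y)
    = (B.card : F) * ∑ x ∈ A, u x * u' x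
      + (∑ x ∈ A, u x) * (∑ y ∈ B, v' y)
      + (∑ x ∈ A, u' x) * (∑ y ∈ B, v y)
      + (A.card : F) * ∑ y ∈ B, v y * v' y := by
  have e0 : ∀ x, ∑ y ∈ B, (u x + v y) * (u' x + v' y)
      = (B.card : F) * (u x * u' x) + u x * ∑ y ∈ B, v' y
        + u' x * ∑ y ∈ B, v y + ∑ y ∈ B, v y * v' y := by
    intro x
    calc ∑ y ∈ B, (u x + v y) * (u' x + v' y)
        = ∑ y ∈ B, (u x * u' x + u x * v' y + u' x * v y + v y * v' y) :=
          Finset.sum_congr rfl (fun y _ => by ring)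
      _ = _ := by
          rw [Finset.sum_add_distrib, Finset.sum_add_distrib, Finset.sum_add_distrib,
            Finset.sum_const, ← Finset.mul_sum, ← Finset.mul_sum, nsmul_eq_mul]
  rw [Finset.sum_congr rfl (fun x _ => e0 x)]
  rw [Finset.sum_add_distrib, Finset.sum_add_distrib, Finset.sum_add_distrib,
    Finset.sum_const, ← Finset.sum_mul, ← Finset.sum_mul, ← Finset.mul_sum,
    nsmul_eq_mul]

open scoped Classical in
theorem stmt_15 (q r s m k : ℕ) (F E K E' K' : Type*)
    [Field F] [Fintype F] [Field E] [Fintype E] [Field K] [Fintype K]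
    [Field E'] [Fintype E'] [Field K'] [Fintype K']
    [Algebra F E] [Algebra E K] [Algebra F K] [IsScalarTower F E K]
    [Algebra F E'] [Algebra E' K'] [Algebra F K'] [IsScalarTower F E' K']
    (hq : Fintype.card F = q) (hE : Fintype.card E = q ^ r) (hK : Fintype.card K = q ^ m)
    (hE' : Fintype.card E' = q ^ s) (hK' : Fintype.card K' = q ^ k)
    (hr : 1 ≤ r) (hs : 1 ≤ s) (hrm : r < m) (hsk : s < k) (hdr : r ∣ m) (hds : s ∣ k)
    (hexc : ¬ ((q = 2 ∧ r + s = 1) ∨ (q = 2 ∧ r + s = 2) ∨ (q = 3 ∧ r + s = 1))) :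
    ∀ (a a' : K) (b b' : K'),
      ∑ p ∈ Finset.univ.filter (fun p : K × K' =>
          p.1 ∉ Set.range (algebraMap E K) ∧ p.2 ∉ Set.range (algebraMap E' K')),
        (Algebra.trace F K (a * p.1) + Algebra.trace F K' (b * p.2)) *
          (Algebra.trace F K (a' * p.1) + Algebra.trace F K' (b' * p.2)) = 0 := by
  intro a a' b b'
  have hq2 : 2 ≤ q := by rw [← hq]; exact Fintype.one_lt_card
  have hqF : (q : F) = 0 := by rw [← hq]; exact Nat.cast_card_eq_zero F
  -- cards of the big fields are not 2
  have hKcard : Fintype.card K ≠ 2 := by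
    rw [hK]
    have h1 : 2 ^ 2 ≤ q ^ m :=
      le_trans (Nat.pow_le_pow_right (by norm_num) (by omega)) (Nat.pow_le_pow_left hq2 m)
    omega
  have hK'card : Fintype.card K' ≠ 2 := by
    rw [hK']
    have h1 : 2 ^ 2 ≤ q ^ k :=
      le_trans (Nat.pow_le_pow_right (by norm_num) (by omega)) (Nat.pow_le_pow_left hq2 k)
    omega
  -- the product set splits
  set A : Finset K := Finset.univ.filter (fun x : K => x ∉ Set.range (algebraMap E K)) with hA
  set B : Finset K' := Finset.univ.filter (fun y : K' => y ∉ Set.range (algebraMap E' K')) with hB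
  have hprod : Finset.univ.filter (fun p : K × K' =>
      p.1 ∉ Set.range (algebraMap E K) ∧ p.2 ∉ Set.range (algebraMap E' K')) = A ×ˢ B := by
    ext p
    simp [hA, hB, Finset.mem_product]
  rw [hprod, Finset.sum_product]
  rw [double_sum_expand A B (fun x => Algebra.trace F K (a * x))
    (fun x => Algebra.trace F K (a' * x)) (fun y => Algebra.trace F K' (b * y))
    (fun y => Algebra.trace F K' (b' * y))]
  -- card casts vanish
  have cardK0 : ((Fintype.card K : ℕ) : F) = 0 := by
    rw [hK, Nat.cast_pow, hqF, zero_pow (by omega)]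
  have cardK'0 : ((Fintype.card K' : ℕ) : F) = 0 := by
    rw [hK', Nat.cast_pow, hqF, zero_pow (by omega)]
  have cardE0 : ((Fintype.card E : ℕ) : F) = 0 := by
    rw [hE, Nat.cast_pow, hqF, zero_pow (by omega)]
  have cardE'0 : ((Fintype.card E' : ℕ) : F) = 0 := by
    rw [hE', Nat.cast_pow, hqF, zero_pow (by omega)]
  have cardA : ((A.card : ℕ) : F) = 0 := by
    have himg : Finset.univ.filter (fun x : K => x ∈ Set.range (algebraMap E K))
        = Finset.univ.image (algebraMap E K) := by ext x; simp
    have hcardfilter : (Finset.univ.filter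
        (fun x : K => x ∈ Set.range (algebraMap E K))).card = Fintype.card E := by
      rw [himg, Finset.card_image_of_injective _ (algebraMap E K).injective,
        Finset.card_univ]
    have hsum := Finset.card_filter_add_card_filter_not
      (s := (Finset.univ : Finset K)) (p := fun x : K => x ∈ Set.range (algebraMap E K))
    rw [Finset.card_univ, hcardfilter] at hsum
    have : A.card = Fintype.card K - Fintype.card E := by
      rw [hA]; omega
    rw [this, Nat.cast_sub (by omega), cardK0, cardE0, sub_zero]
  have cardB : ((B.card : ℕ) : F) = 0 := by
    have himg : Finset.univ.filter (fun y : K' => y ∈ Set.range (algebraMap E' K'))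
        = Finset.univ.image (algebraMap E' K') := by ext y; simp
    have hcardfilter : (Finset.univ.filter
        (fun y : K' => y ∈ Set.range (algebraMap E' K'))).card = Fintype.card E' := by
      rw [himg, Finset.card_image_of_injective _ (algebraMap E' K').injective,
        Finset.card_univ]
    have hsum := Finset.card_filter_add_card_filter_not
      (s := (Finset.univ : Finset K')) (p := fun y : K' => y ∈ Set.range (algebraMap E' K'))
    rw [Finset.card_univ, hcardfilter] at hsum
    have : B.card = Fintype.card K' - Fintype.card E' := by
      rw [hB]; omega
    rw [this, Nat.cast_sub (by omega), cardK'0, cardE'0, sub_zero]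
  rw [cardA, cardB, zero_mul, zero_mul]
  -- cross terms
  have key : (∀ c : K, ∑ x ∈ A, Algebra.trace F K (c * x) = 0) ∨
      (∀ c : K', ∑ y ∈ B, Algebra.trace F K' (c * y) = 0) := by
    by_cases hE2 : Fintype.card E = 2
    · right
      have hq2' : q = 2 ∧ r = 1 := by
        rw [hE] at hE2
        have hqdvd : q ∣ 2 := hE2 ▸ dvd_pow_self q (by omega)
        have hq2'' : q = 2 := by
          have := Nat.le_of_dvd (by norm_num) hqdvd
          omega
        subst hq2''
        constructor
        · rfl
        · have := Nat.pow_right_injective (le_refl 2) (hE2.trans (pow_one 2).symm)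
          exact this
      obtain ⟨hq2', hr1⟩ := hq2'
      have hs2 : 2 ≤ s := by
        rcases Nat.lt_or_ge s 2 with h | h
        · exfalso; apply hexc; right; left; omega
        · exact h
      have hE'2 : Fintype.card E' ≠ 2 := by
        rw [hE']
        have h1 : 2 ^ 2 ≤ q ^ s :=
          le_trans (Nat.pow_le_pow_right (by norm_num) hs2) (Nat.pow_le_pow_left hq2 s)
        omega
      intro c
      exact sum_trace_compl hK'card hE'2 c
    · left
      intro c
      exact sum_trace_compl hKcard hE2 c
  rcases key with hleft | hright
  · rw [hleft a, hleft a', zero_mul, zero_mul]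
    ring
  · rw [hright b, hright b', mul_zero, mul_zero]
    ring
end

section
/- Let q be a prime power and m, k positive integers with k ≤ m and q^m > q^{m−k} + 1. Let D = F_{q^m}* × F_{q^k}*. For (a,b) ≠ (0,0), the Hamming weight of c_{a,b} = (Tr_{F_{q^m}/F_q}(ax) + Tr_{F_{q^k}/F_q}(by))_{(x,y)∈D} equals: (q−1)(q^{m+k−1} − q^{k−1}) if a = 0, b ≠ 0; (q−1)(q^{m+k−1} − q^{m−1}) if a ≠ 0, b = 0; and (q−1)(q^{m+k−1} − q^{m−1} − q^{k−1}) if a ≠ 0 and b ≠ 0. -/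
open scoped Classical

section Helpers

variable {F K : Type*} [Field F] [Fintype F] [Field K] [Fintype K] [Algebra F K]

lemma fiber_card_mul (φ : K →ₗ[F] F) (hφ : Function.Surjective φ) (c : F) :
    (Finset.univ.filter fun x : K => φ x = c).card * Fintype.card F = Fintype.card K := by
  have key : ∀ c : F, (Finset.univ.filter fun x : K => φ x = c).card
      = (Finset.univ.filter fun x : K => φ x = 0).card := by
    intro c
    obtain ⟨x0, hx0⟩ := hφ c
    apply Finset.card_bij' (fun x _ => x - x0) (fun x _ => x + x0)
    · intro a ha
      simp only [Finset.mem_filter, Finset.mem_univ, true_and] at ha ⊢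
      rw [map_sub, ha, hx0, sub_self]
    · intro a ha
      simp only [Finset.mem_filter, Finset.mem_univ, true_and] at ha ⊢
      rw [map_add, ha, hx0, zero_add]
    · intro a _; ring
    · intro a _; ring
  have hcard : Fintype.card K = ∑ c : F, (Finset.univ.filter fun x : K => φ x = c).card := by
    rw [← Finset.card_univ]
    exact Finset.card_eq_sum_card_fiberwise (fun x _ => Finset.mem_univ _)
  rw [key c, hcard]
  simp only [key, Finset.sum_const, Finset.card_univ, smul_eq_mul]
  ring

lemma trace_count {q n : ℕ} (hq : Fintype.card F = q) (hK : Fintype.card K = q ^ n)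
    (a : K) (ha : a ≠ 0) (c : F) :
    (Finset.univ.filter fun x : K => Algebra.trace F K (a * x) = c).card = q ^ (n - 1) := by
  have hq2 : 2 ≤ q := hq ▸ Fintype.one_lt_card
  have hcard := Fintype.one_lt_card (α := K)
  rw [hK] at hcard
  have hn : 1 ≤ n := by
    by_contra h
    have hn0 : n = 0 := by omega
    rw [hn0, pow_zero] at hcard; omega
  have : FiniteDimensional F K := Module.Finite.of_finite
  set φ : K →ₗ[F] F := (Algebra.trace F K).comp ((Algebra.lmul F K) a) with hφdef
  have hφ : Function.Surjective φ := by
    intro c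
    obtain ⟨y, hy⟩ := Algebra.trace_surjective F K c
    refine ⟨a⁻¹ * y, ?_⟩
    show Algebra.trace F K (a * (a⁻¹ * y)) = c
    rw [← mul_assoc, mul_inv_cancel₀ ha, one_mul, hy]
  have hset : (Finset.univ.filter fun x : K => Algebra.trace F K (a * x) = c)
      = (Finset.univ.filter fun x : K => φ x = c) := rfl
  have key := fiber_card_mul φ hφ c
  rw [hK, hq] at key
  have hpow : q ^ n = q ^ (n - 1) * q := by rw [← pow_succ]; congr 1; omega
  rw [hpow] at key
  rw [hset]
  exact Nat.eq_of_mul_eq_mul_right (by omega) key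

lemma trace_count_ne {q n : ℕ} (hq : Fintype.card F = q) (hK : Fintype.card K = q ^ n)
    (a : K) (ha : a ≠ 0) (c : F) :
    (Finset.univ.filter fun x : K => x ≠ 0 ∧ Algebra.trace F K (a * x) = c).card
      = q ^ (n - 1) - (if c = 0 then 1 else 0) := by
  have hset : (Finset.univ.filter fun x : K => x ≠ 0 ∧ Algebra.trace F K (a * x) = c)
      = (Finset.univ.filter fun x : K => Algebra.trace F K (a * x) = c).erase 0 := by
    ext x
    simp only [Finset.mem_filter, Finset.mem_univ, true_and, Finset.mem_erase]
  rw [hset, Finset.card_erase_eq_ite, trace_count hq hK a ha c]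
  have hmem : (0 : K) ∈ Finset.univ.filter (fun x : K => Algebra.trace F K (a * x) = c) ↔ c = 0 := by
    simp [eq_comm]
  by_cases hc : c = 0
  · rw [if_pos (hmem.mpr hc), if_pos hc]
  · rw [if_neg (fun h => hc (hmem.mp h)), if_neg hc, Nat.sub_zero]

lemma trace_count_nonzero {q n : ℕ} (hq : Fintype.card F = q) (hK : Fintype.card K = q ^ n)
    (a : K) (ha : a ≠ 0) :
    (Finset.univ.filter fun x : K => x ≠ 0 ∧ Algebra.trace F K (a * x) ≠ 0).card
      = q ^ n - q ^ (n - 1) := by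
  have hsplit := Finset.card_filter_add_card_filter_not
    (s := Finset.univ.filter fun x : K => x ≠ 0)
    (fun x : K => Algebra.trace F K (a * x) = 0)
  rw [Finset.filter_filter, Finset.filter_filter] at hsplit
  have h1 : (Finset.univ.filter fun x : K => x ≠ 0 ∧ Algebra.trace F K (a * x) = 0).card
      = q ^ (n - 1) - 1 := by
    rw [trace_count_ne hq hK a ha 0, if_pos rfl]
  have h2 : (Finset.univ.filter fun x : K => x ≠ 0).card = q ^ n - 1 := by
    rw [Finset.filter_ne' Finset.univ 0, Finset.card_erase_of_mem (Finset.mem_univ _),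
      Finset.card_univ, hK]
  have hle : q ^ (n - 1) ≤ q ^ n := Nat.pow_le_pow_right (by
      have : 2 ≤ q := hq ▸ Fintype.one_lt_card
      omega) (by omega)
  have hpos : 1 ≤ q ^ (n - 1) := Nat.one_le_pow _ _ (by
      have : 2 ≤ q := hq ▸ Fintype.one_lt_card
      omega)
  have hsame : (Finset.univ.filter fun x : K => x ≠ 0 ∧ ¬ Algebra.trace F K (a * x) = 0)
      = Finset.univ.filter fun x : K => x ≠ 0 ∧ Algebra.trace F K (a * x) ≠ 0 := rfl
  rw [h1, h2, hsame] at hsplit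
  omega

end Helpers

set_option maxHeartbeats 1000000 in
open scoped Classical in
theorem stmt_16 (q m k : ℕ) (F K K' : Type*)
    [Field F] [Fintype F] [Field K] [Fintype K] [Field K'] [Fintype K']
    [Algebra F K] [Algebra F K']
    (hq : Fintype.card F = q) (hK : Fintype.card K = q ^ m) (hK' : Fintype.card K' = q ^ k)
    (hkm : k ≤ m) (hbig : q ^ (m - k) + 1 < q ^ m)
    (wt : K → K' → ℕ)
    (hwt : ∀ a b, wt a b = (Finset.univ.filter (fun p : K × K' =>
        p.1 ≠ 0 ∧ p.2 ≠ 0 ∧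
        Algebra.trace F K (a * p.1) + Algebra.trace F K' (b * p.2) ≠ 0)).card) :
    (∀ b : K', b ≠ 0 → wt 0 b = (q - 1) * (q ^ (m + k - 1) - q ^ (k - 1))) ∧
    (∀ a : K, a ≠ 0 → wt a 0 = (q - 1) * (q ^ (m + k - 1) - q ^ (m - 1))) ∧
    (∀ (a : K) (b : K'), a ≠ 0 → b ≠ 0 →
      wt a b = (q - 1) * (q ^ (m + k - 1) - q ^ (m - 1) - q ^ (k - 1))) := by
  have hq2 : 2 ≤ q := hq ▸ Fintype.one_lt_card
  have hm1 : 1 ≤ m := by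
    by_contra h
    have hm0 : m = 0 := by omega
    have := hK ▸ (Fintype.one_lt_card (α := K))
    rw [hm0, pow_zero] at this; omega
  have hk1 : 1 ≤ k := by
    by_contra h
    have hk0 : k = 0 := by omega
    have := hK' ▸ (Fintype.one_lt_card (α := K'))
    rw [hk0, pow_zero] at this; omega
  have em : q ^ m = q ^ (m - 1) * q := by rw [← pow_succ]; congr 1; omega
  have ek : q ^ k = q ^ (k - 1) * q := by rw [← pow_succ]; congr 1; omega
  have emk : q ^ (m + k - 1) = q ^ (m - 1) * q ^ (k - 1) * q := by
    rw [mul_assoc, ← pow_succ, ← pow_add]; congr 1; omega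
  have hA1 : 1 ≤ q ^ (m - 1) := Nat.one_le_pow _ _ (by omega)
  have hB1 : 1 ≤ q ^ (k - 1) := Nat.one_le_pow _ _ (by omega)
  have lA : q ^ (m - 1) ≤ q ^ (m - 1) * q := Nat.le_mul_of_pos_right _ (by omega)
  have lB : q ^ (k - 1) ≤ q ^ (k - 1) * q := Nat.le_mul_of_pos_right _ (by omega)
  have oneA : 1 ≤ q ^ (m - 1) * q := le_trans hA1 lA
  have oneB : 1 ≤ q ^ (k - 1) * q := le_trans hB1 lB
  have lAB : q ^ (m - 1) + q ^ (k - 1) ≤ q ^ (m - 1) * q ^ (k - 1) * q := by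
    nlinarith [hA1, hB1, hq2]
  have lA' : q ^ (m - 1) ≤ q ^ (m - 1) * q ^ (k - 1) * q := by omega
  have lB' : q ^ (k - 1) ≤ q ^ (m - 1) * q ^ (k - 1) * q := by omega
  refine ⟨?_, ?_, ?_⟩
  · -- a = 0, b ≠ 0
    intro b hb
    rw [hwt]
    have hcond : (Finset.univ.filter (fun p : K × K' =>
        p.1 ≠ 0 ∧ p.2 ≠ 0 ∧
        Algebra.trace F K ((0 : K) * p.1) + Algebra.trace F K' (b * p.2) ≠ 0))
        = (Finset.univ.filter fun x : K => x ≠ 0) ×ˢ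
          (Finset.univ.filter fun y : K' => y ≠ 0 ∧ Algebra.trace F K' (b * y) ≠ 0) := by
      ext p
      simp only [Finset.mem_filter, Finset.mem_univ, true_and, Finset.mem_product,
        zero_mul, map_zero, zero_add]
    rw [hcond, Finset.card_product]
    have h1 : (Finset.univ.filter fun x : K => x ≠ 0).card = q ^ m - 1 := by
      rw [Finset.filter_ne' Finset.univ 0, Finset.card_erase_of_mem (Finset.mem_univ _),
        Finset.card_univ, hK]
    have h2 := trace_count_nonzero hq hK' b hb
    rw [h1, h2, em, ek, emk]
    zify [lB, lB', oneA, show (1:ℕ) ≤ q by omega]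
    ring
  · -- a ≠ 0, b = 0
    intro a ha
    rw [hwt]
    have hcond : (Finset.univ.filter (fun p : K × K' =>
        p.1 ≠ 0 ∧ p.2 ≠ 0 ∧
        Algebra.trace F K (a * p.1) + Algebra.trace F K' ((0 : K') * p.2) ≠ 0))
        = (Finset.univ.filter fun x : K => x ≠ 0 ∧ Algebra.trace F K (a * x) ≠ 0) ×ˢ
          (Finset.univ.filter fun y : K' => y ≠ 0) := by
      ext p
      simp only [Finset.mem_filter, Finset.mem_univ, true_and, Finset.mem_product,
        zero_mul, map_zero, add_zero]
      tauto
    rw [hcond, Finset.card_product]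
    have h1 := trace_count_nonzero hq hK a ha
    have h2 : (Finset.univ.filter fun y : K' => y ≠ 0).card = q ^ k - 1 := by
      rw [Finset.filter_ne' Finset.univ 0, Finset.card_erase_of_mem (Finset.mem_univ _),
        Finset.card_univ, hK']
    rw [h1, h2, em, ek, emk]
    zify [lA, lA', oneB, show (1:ℕ) ≤ q by omega]
    ring
  · -- a ≠ 0, b ≠ 0
    intro a b ha hb
    rw [hwt]
    set f : K × K' → F := fun p => Algebra.trace F K (a * p.1) + Algebra.trace F K' (b * p.2) with hf
    set S := Finset.univ.filter (fun p : K × K' => p.1 ≠ 0 ∧ p.2 ≠ 0 ∧ f p ≠ 0) with hS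
    set Z := Finset.univ.filter (fun p : K × K' => p.1 ≠ 0 ∧ p.2 ≠ 0 ∧ f p = 0) with hZ
    set T := Finset.univ.filter (fun p : K × K' => p.1 ≠ 0 ∧ p.2 ≠ 0) with hT
    have hTZ : S.card + Z.card = T.card := by
      have h := Finset.card_filter_add_card_filter_not (s := T)
        (fun p : K × K' => f p ≠ 0)
      rw [hT, Finset.filter_filter, Finset.filter_filter] at h
      have e1 : (Finset.univ.filter fun p : K × K' => (p.1 ≠ 0 ∧ p.2 ≠ 0) ∧ f p ≠ 0) = S := by
        rw [hS]
        ext p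
        simp only [Finset.mem_filter, Finset.mem_univ, true_and]
        tauto
      have e2 : (Finset.univ.filter fun p : K × K' => (p.1 ≠ 0 ∧ p.2 ≠ 0) ∧ ¬ f p ≠ 0) = Z := by
        rw [hZ]
        ext p
        simp only [Finset.mem_filter, Finset.mem_univ, true_and, not_not]
        tauto
      rw [e1, e2, ← hT] at h
      exact h
    have hTcard : T.card = (q ^ m - 1) * (q ^ k - 1) := by
      have e1 : T = (Finset.univ.filter fun x : K => x ≠ 0) ×ˢ
          (Finset.univ.filter fun y : K' => y ≠ 0) := by
        rw [hT]
        ext p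
        simp only [Finset.mem_filter, Finset.mem_univ, true_and, Finset.mem_product]
      rw [e1, Finset.card_product,
        Finset.filter_ne' Finset.univ 0, Finset.card_erase_of_mem (Finset.mem_univ _),
        Finset.filter_ne' Finset.univ 0, Finset.card_erase_of_mem (Finset.mem_univ _),
        Finset.card_univ, Finset.card_univ, hK, hK']
    have hZsum : Z.card = ∑ x : K, (Finset.univ.filter fun y : K' =>
        x ≠ 0 ∧ y ≠ 0 ∧ Algebra.trace F K (a * x) + Algebra.trace F K' (b * y) = 0).card := by
      rw [hZ]
      rw [← Nat.cast_id (Finset.card _), Finset.natCast_card_filter, Fintype.sum_prod_type]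
      apply Finset.sum_congr rfl
      intro x _
      rw [← Nat.cast_id (Finset.card _), Finset.natCast_card_filter]
    have hinner : ∀ x : K, (Finset.univ.filter fun y : K' =>
        x ≠ 0 ∧ y ≠ 0 ∧ Algebra.trace F K (a * x) + Algebra.trace F K' (b * y) = 0).card
        = (if x ≠ 0 ∧ Algebra.trace F K (a * x) = 0 then q ^ (k - 1) - 1 else 0)
          + (if x ≠ 0 ∧ Algebra.trace F K (a * x) ≠ 0 then q ^ (k - 1) else 0) := by
      intro x
      by_cases hx : x = 0
      · simp [hx]
      · have heq : (Finset.univ.filter fun y : K' =>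
            x ≠ 0 ∧ y ≠ 0 ∧ Algebra.trace F K (a * x) + Algebra.trace F K' (b * y) = 0)
            = (Finset.univ.filter fun y : K' =>
              y ≠ 0 ∧ Algebra.trace F K' (b * y) = -(Algebra.trace F K (a * x))) := by
          apply Finset.filter_congr
          intro y _
          constructor
          · rintro ⟨_, h2, h3⟩; exact ⟨h2, by linear_combination h3⟩
          · rintro ⟨h2, h3⟩; exact ⟨hx, h2, by linear_combination h3⟩
        rw [heq, trace_count_ne hq hK' b hb]
        by_cases htr : Algebra.trace F K (a * x) = 0
        · simp [htr, hx]
        · simp [neg_eq_zero, htr, hx]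
    have hZcard : Z.card = (q ^ (m - 1) - 1) * (q ^ (k - 1) - 1)
        + (q ^ m - q ^ (m - 1)) * q ^ (k - 1) := by
      rw [hZsum]
      calc (∑ x : K, (Finset.univ.filter fun y : K' =>
          x ≠ 0 ∧ y ≠ 0 ∧ Algebra.trace F K (a * x) + Algebra.trace F K' (b * y) = 0).card)
          = ∑ x : K, ((if x ≠ 0 ∧ Algebra.trace F K (a * x) = 0 then q ^ (k - 1) - 1 else 0)
            + (if x ≠ 0 ∧ Algebra.trace F K (a * x) ≠ 0 then q ^ (k - 1) else 0)) :=
            Finset.sum_congr rfl fun x _ => hinner x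
        _ = (∑ x : K, if x ≠ 0 ∧ Algebra.trace F K (a * x) = 0 then q ^ (k - 1) - 1 else 0)
            + (∑ x : K, if x ≠ 0 ∧ Algebra.trace F K (a * x) ≠ 0 then q ^ (k - 1) else 0) :=
            Finset.sum_add_distrib
        _ = (Finset.univ.filter fun x : K =>
              x ≠ 0 ∧ Algebra.trace F K (a * x) = 0).card * (q ^ (k - 1) - 1)
            + (Finset.univ.filter fun x : K =>
              x ≠ 0 ∧ Algebra.trace F K (a * x) ≠ 0).card * q ^ (k - 1) := by
            rw [← Finset.sum_filter, ← Finset.sum_filter, Finset.sum_const, Finset.sum_const,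
              smul_eq_mul, smul_eq_mul]
        _ = (q ^ (m - 1) - 1) * (q ^ (k - 1) - 1) + (q ^ m - q ^ (m - 1)) * q ^ (k - 1) := by
            rw [trace_count_ne hq hK a ha 0, if_pos rfl, trace_count_nonzero hq hK a ha]
    have lB'' : q ^ (k - 1) ≤ q ^ (m - 1) * q ^ (k - 1) * q - q ^ (m - 1) := by omega
    have harith : (q - 1) * (q ^ (m + k - 1) - q ^ (m - 1) - q ^ (k - 1)) + Z.card = T.card := by
      rw [hZcard, hTcard, em, ek, emk]
      zify [lA', lB'', lA, hA1, hB1, oneA, oneB, show (1:ℕ) ≤ q by omega]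
      ring
    exact Nat.add_right_cancel (hTZ.trans harith.symm)
end

section
/- Let q be a prime power and m > k ≥ 1 positive integers. Then ∑_{i=0}^{m+k−1} ⌈(q−1)(q^{m+k−1} − q^{m−1} − q^{k−1})/q^i⌉ = q^{m+k} − q^m − q^k + 1, i.e., the [q^{m+k} − q^m − q^k + 1, m+k, (q−1)(q^{m+k−1} − q^{m−1} − q^{k−1})] code meets the Griesmer bound with equality. -/
/-!
Write the numerator as `(q - 1) q^(m+k-1) - r` with `r = (q - 1) q^(m-1) + (q - 1) q^(k-1)`.
For `i < m + k` the power `q^i` divides the first term, so the `i`-th ceiling equals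
`(q - 1) q^(m+k-1) / q^i - ⌊r / q^i⌋`. The base-`q` digits of `r` are two isolated `q - 1`'s,
so `⌊r / q^i⌋` splits into the floors of the two terms. Each of the three resulting sums has the
form `∑_{i < n} ⌊(q - 1) q^j / q^i⌋ = (q - 1)(1 + q + ⋯ + q^j) = q^(j+1) - 1`.
-/

open Finset

namespace Nat

theorem sub_add_sub_one_div_of_dvd {x c : ℕ} (r : ℕ) (hc : 0 < c) (hx : c ∣ x) :
    (x - r + c - 1) / c = x / c - r / c := by
  obtain ⟨a, rfl⟩ := hx
  rw [Nat.mul_div_cancel_left a hc]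
  have hr := Nat.div_add_mod r c
  have ht := Nat.mod_lt r hc
  have hmul : c * a ≤ c * (r / c) ∨ c * (r / c) ≤ c * a :=
    (le_total a (r / c)).imp (Nat.mul_le_mul_left c) (Nat.mul_le_mul_left c)
  apply Nat.div_eq_of_lt_le
  · rw [Nat.sub_mul, mul_comm a, mul_comm (r / c)]; omega
  · rw [Nat.succ_mul, Nat.sub_mul, mul_comm a, mul_comm (r / c)]; omega

theorem sub_one_mul_geom_sum {q : ℕ} (hq : 0 < q) (n : ℕ) :
    (q - 1) * ∑ i ∈ range n, q ^ i = q ^ n - 1 := by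
  have h := geom_sum_mul_add (q - 1) n
  rw [Nat.sub_add_cancel (show 1 ≤ q from hq), mul_comm] at h
  omega

theorem sum_sub_one_mul_pow_div_pow {q j n : ℕ} (hq : 0 < q) (hjn : j < n) :
    ∑ i ∈ range n, (q - 1) * q ^ j / q ^ i = q ^ (j + 1) - 1 := by
  obtain ⟨l, rfl⟩ := Nat.exists_eq_add_of_le (show j + 1 ≤ n from hjn)
  have hlow : ∀ i ∈ range (j + 1), (q - 1) * q ^ j / q ^ i = (q - 1) * q ^ (j - i) := by
    intro i hi
    have hij : i ≤ j := Nat.lt_succ_iff.mp (mem_range.mp hi)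
    rw [Nat.mul_div_assoc _ (pow_dvd_pow q hij), Nat.pow_div hij hq]
  have hlt : (q - 1) * q ^ j < q ^ (j + 1) := by
    rw [pow_succ']; exact Nat.mul_lt_mul_of_pos_right (by omega) (by positivity)
  have hhigh : ∀ i ∈ range l, (q - 1) * q ^ j / q ^ (j + 1 + i) = 0 := fun i _ =>
    Nat.div_eq_of_lt (hlt.trans_le (Nat.pow_le_pow_right hq (by omega)))
  have hreflect : ∑ i ∈ range (j + 1), q ^ (j - i) = ∑ i ∈ range (j + 1), q ^ i := by
    simpa using sum_range_reflect (q ^ ·) (j + 1)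
  rw [sum_range_add, sum_congr rfl hlow, sum_congr rfl hhigh, sum_const_zero, add_zero,
    ← mul_sum, hreflect, sub_one_mul_geom_sum hq]

theorem sub_one_mul_pow_add_pow {q : ℕ} (hq : 0 < q) (j : ℕ) :
    (q - 1) * q ^ j + q ^ j = q ^ (j + 1) := by
  rw [pow_succ', ← Nat.succ_mul, Nat.succ_eq_add_one, Nat.sub_add_cancel hq]

theorem sub_one_mul_pow_add_sub_one_mul_pow_lt {q a b : ℕ} (hq : 0 < q) (hba : b < a) :
    (q - 1) * q ^ a + (q - 1) * q ^ b < q ^ (a + 1) := by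
  have := sub_one_mul_pow_add_pow hq a
  have := sub_one_mul_pow_add_pow hq b
  have := Nat.pow_le_pow_right hq (show b + 1 ≤ a from hba)
  have : 0 < q ^ b := by positivity
  omega

theorem sub_one_mul_pow_add_div_pow {q a b : ℕ} (hq : 0 < q) (hba : b < a) (i : ℕ) :
    ((q - 1) * q ^ a + (q - 1) * q ^ b) / q ^ i
      = (q - 1) * q ^ a / q ^ i + (q - 1) * q ^ b / q ^ i := by
  rcases le_or_gt i a with hia | hai
  · exact Nat.add_div_of_dvd_right (dvd_mul_of_dvd_right (pow_dvd_pow q hia) _)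
  · have hlt := (sub_one_mul_pow_add_sub_one_mul_pow_lt hq hba).trans_le
      (Nat.pow_le_pow_right hq (show a + 1 ≤ i from hai))
    rw [Nat.div_eq_of_lt hlt, Nat.div_eq_of_lt (by omega), Nat.div_eq_of_lt (by omega)]

theorem pow_add_pow_le_pow_add {q m k : ℕ} (hq : 2 ≤ q) (hm : 1 ≤ m) (hk : 1 ≤ k) :
    q ^ m + q ^ k ≤ q ^ (m + k) := by
  have hqm : 2 ≤ q ^ m := hq.trans (Nat.le_self_pow (by omega) q)
  have hqk : 2 ≤ q ^ k := hq.trans (Nat.le_self_pow (by omega) q)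
  rw [pow_add]
  nlinarith

end Nat

theorem stmt_17 (q m k : ℕ) (hq : IsPrimePow q) (hk : 1 ≤ k) (hmk : k < m) :
    ∑ i ∈ Finset.range (m + k),
        ((q - 1) * (q ^ (m + k - 1) - q ^ (m - 1) - q ^ (k - 1)) + q ^ i - 1) / q ^ i
      = q ^ (m + k) - q ^ m - q ^ k + 1 := by
  have hq2 := hq.two_le
  have hq0 : 0 < q := by omega
  have hsplit := Nat.sub_one_mul_pow_add_div_pow hq0 (show k - 1 < m - 1 by omega)
  have hr : (q - 1) * q ^ (m - 1) + (q - 1) * q ^ (k - 1) ≤ (q - 1) * q ^ (m + k - 1) :=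
    calc _ ≤ q ^ (m - 1 + 1) := (Nat.sub_one_mul_pow_add_sub_one_mul_pow_lt hq0 (by omega)).le
      _ ≤ q ^ (m + k - 1) := Nat.pow_le_pow_right hq0 (by omega)
      _ ≤ (q - 1) * q ^ (m + k - 1) := Nat.le_mul_of_pos_left _ (by omega)
  have hterm : ∀ i ∈ range (m + k),
      ((q - 1) * (q ^ (m + k - 1) - q ^ (m - 1) - q ^ (k - 1)) + q ^ i - 1) / q ^ i
        = (q - 1) * q ^ (m + k - 1) / q ^ i
          - ((q - 1) * q ^ (m - 1) / q ^ i + (q - 1) * q ^ (k - 1) / q ^ i) := by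
    intro i hi
    have hdvd : q ^ i ∣ (q - 1) * q ^ (m + k - 1) :=
      dvd_mul_of_dvd_right (pow_dvd_pow q (by simp only [mem_range] at hi; omega)) _
    rw [Nat.mul_sub, Nat.mul_sub, Nat.sub_sub,
      Nat.sub_add_sub_one_div_of_dvd _ (pow_pos hq0 i) hdvd, hsplit]
  have hpow := Nat.pow_add_pow_le_pow_add hq2 (show 1 ≤ m by omega) hk
  rw [sum_congr rfl hterm,
    sum_tsub_distrib _ fun i _ => by rw [← hsplit]; exact Nat.div_le_div_right hr,
    sum_add_distrib, Nat.sum_sub_one_mul_pow_div_pow hq0 (by omega),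
    Nat.sum_sub_one_mul_pow_div_pow hq0 (by omega), Nat.sum_sub_one_mul_pow_div_pow hq0 (by omega),
    Nat.sub_add_cancel (by omega : 1 ≤ m + k), Nat.sub_add_cancel (by omega : 1 ≤ m),
    Nat.sub_add_cancel hk]
  have : 0 < q ^ m := by positivity
  have : 0 < q ^ k := by positivity
  omega
end

section
/- Let C be a linear code over F_q in which every nonzero codeword has Hamming weight w satisfying w_min ≤ w ≤ w_max with w_min/w_max > (q−1)/q. Then C is minimal, i.e., for any two nonzero codewords u, v with Suppt(v) ⊆ Suppt(u), there exists a ∈ F_q* with v = a·u. -/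
theorem stmt_18 (q n wmin wmax : ℕ) (F : Type*) [Field F] [Fintype F] [DecidableEq F]
    (hq : Fintype.card F = q)
    (C : Submodule F (Fin n → F))
    (hbound : ∀ c ∈ C, c ≠ 0 → wmin ≤ hammingNorm c ∧ hammingNorm c ≤ wmax)
    (hratio : (q - 1) * wmax < q * wmin) :
    ∀ u ∈ C, ∀ v ∈ C, u ≠ 0 → v ≠ 0 →
      (∀ i, v i ≠ 0 → u i ≠ 0) → ∃ a : F, a ≠ 0 ∧ v = a • u := by
  intro u hu v hv hune hvne hsupp
  by_contra h
  push_neg at h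
  have hz : ∀ a : F, v - a • u ≠ 0 := by
    intro a hzero
    have hv' : v = a • u := by rwa [sub_eq_zero] at hzero
    rcases eq_or_ne a 0 with rfl | ha
    · rw [zero_smul] at hv'; exact hvne hv'
    · exact h a ha hv'
  have hmem : ∀ a : F, v - a • u ∈ C := fun a => C.sub_mem hv (C.smul_mem a hu)
  have hlow : ∀ a : F, wmin ≤ hammingNorm (v - a • u) := fun a =>
    (hbound _ (hmem a) (hz a)).1
  -- key pointwise count
  have key : ∀ i, (∑ a : F, if (v - a • u) i ≠ 0 then 1 else 0) =
      if u i ≠ 0 then q - 1 else 0 := by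
    intro i
    by_cases hui : u i = 0
    · have hvi : v i = 0 := by
        by_contra hvi; exact hsupp i hvi hui
      simp [hui, hvi]
    · rw [if_pos hui]
      have hfilter : (Finset.univ.filter fun a : F => ¬ ((v - a • u) i ≠ 0)) =
          {v i * (u i)⁻¹} := by
        ext a
        simp only [Finset.mem_filter, Finset.mem_univ, true_and, not_not,
          Finset.mem_singleton, Pi.sub_apply, Pi.smul_apply, smul_eq_mul, sub_eq_zero]
        constructor
        · intro hva
          field_simp
          exact hva.symm
        · intro ha
          subst ha
          field_simp
      have htot : (∑ a : F, if (v - a • u) i ≠ 0 then 1 else 0) +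
          (∑ a : F, if ¬ ((v - a • u) i ≠ 0) then 1 else 0) = q := by
        rw [← Finset.sum_add_distrib]
        have : ∀ a : F, ((if (v - a • u) i ≠ 0 then 1 else 0) +
            (if ¬ ((v - a • u) i ≠ 0) then 1 else 0)) = 1 := by
          intro a
          by_cases hh : v i - a * u i = 0 <;>
            simp [Pi.sub_apply, Pi.smul_apply, smul_eq_mul, hh]
        rw [Finset.sum_congr rfl fun a _ => this a]
        simp [Finset.card_univ, hq]
      have hone : (∑ a : F, if ¬ ((v - a • u) i ≠ 0) then 1 else 0) = 1 := by
        rw [← Finset.card_filter, hfilter, Finset.card_singleton]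
      omega
  have hsum : (∑ a : F, hammingNorm (v - a • u)) = (q - 1) * hammingNorm u := by
    have hn : ∀ a : F, hammingNorm (v - a • u) =
        ∑ i, if (v - a • u) i ≠ 0 then 1 else 0 := by
      intro a
      rw [hammingNorm, Finset.card_filter]
    calc (∑ a : F, hammingNorm (v - a • u))
        = ∑ a : F, ∑ i, if (v - a • u) i ≠ 0 then 1 else 0 :=
          Finset.sum_congr rfl fun a _ => hn a
      _ = ∑ i, ∑ a : F, if (v - a • u) i ≠ 0 then 1 else 0 := Finset.sum_comm
      _ = ∑ i, if u i ≠ 0 then q - 1 else 0 :=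
          Finset.sum_congr rfl fun i _ => key i
      _ = (q - 1) * hammingNorm u := by
          rw [hammingNorm, Finset.card_filter, Finset.mul_sum]
          refine Finset.sum_congr rfl fun i _ => ?_
          by_cases hui : u i ≠ 0 <;> simp [hui]
  have h1 : q * wmin ≤ ∑ a : F, hammingNorm (v - a • u) := by
    calc q * wmin = ∑ _a : F, wmin := by
          rw [Finset.sum_const, smul_eq_mul, Finset.card_univ, hq]
      _ ≤ ∑ a : F, hammingNorm (v - a • u) := Finset.sum_le_sum fun a _ => hlow a
  have h2 : (q - 1) * hammingNorm u ≤ (q - 1) * wmax :=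
    Nat.mul_le_mul_left _ (hbound u hu hune).2
  omega
end
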